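/- arXiv:1410.3988 — 12 statements merged into one kernel-verified Lean document; each statement's English description precedes it below -/
import Mathlib

section
/- Let 𝒳 and 𝒴 be finite sets, p_X an input pmf on 𝒳, and W a strictly positive channel from 𝒳 to 𝒴, with joint pmf p(x,y) = p_X(x)·W(y|x) and output pmf p_Y(y) = Σ_x p_X(x)·W(y|x). Then the mutual information satisfies I(p_X, W) ≤ Σ_{x,y} [p(x,y) − p_X(x)·p_Y(y)] · log W(y|x). -/
/-!
Split `log (p(x,y) / (pX x * pY y))` as `log W(y|x) - log pY(y)`. The difference of the two sides
is then `∑_y pY(y) * (log pY(y) - ∑_x pX(x) * log W(y|x))`, and each bracket is nonnegative by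
Jensen's inequality for the concave `log`, since `pY(y) = ∑_x pX(x) * W(y|x)`.
-/

open Finset Real

lemma sum_mul_pos_of_sum_eq_one {ι : Type*} {s : Finset ι} {w a : ι → ℝ}
    (hw : ∀ i ∈ s, 0 ≤ w i) (hw1 : ∑ i ∈ s, w i = 1) (ha : ∀ i ∈ s, 0 < a i) :
    0 < ∑ i ∈ s, w i * a i := by
  obtain ⟨i, hi, hwi⟩ := exists_ne_zero_of_sum_ne_zero (hw1 ▸ one_ne_zero)
  exact sum_pos' (fun j hj => mul_nonneg (hw j hj) (ha j hj).le)
    ⟨i, hi, mul_pos ((hw i hi).lt_of_ne' hwi) (ha i hi)⟩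

lemma sum_mul_log_le_log_sum_mul {ι : Type*} {s : Finset ι} {w a : ι → ℝ}
    (hw : ∀ i ∈ s, 0 ≤ w i) (hw1 : ∑ i ∈ s, w i = 1) (ha : ∀ i ∈ s, 0 < a i) :
    ∑ i ∈ s, w i * log (a i) ≤ log (∑ i ∈ s, w i * a i) :=
  strictConcaveOn_log_Ioi.concaveOn.le_map_sum hw hw1 ha

lemma mul_log_mul_div_mul_left (a : ℝ) {b c : ℝ} (hb : b ≠ 0) (hc : c ≠ 0) :
    a * b * log (a * b / (a * c)) = a * b * (log b - log c) := by
  rcases eq_or_ne a 0 with rfl | ha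
  · simp
  · rw [mul_div_mul_left _ _ ha, log_div hb hc]

theorem stmt_1_general {𝒳 𝒴 : Type*} [Fintype 𝒳] [Fintype 𝒴]
    (pX : 𝒳 → ℝ) (W : 𝒳 → 𝒴 → ℝ)
    (hpX0 : ∀ x, 0 ≤ pX x) (hpXsum : ∑ x, pX x = 1)
    (hWpos : ∀ x y, 0 < W x y) :
    (∑ x, ∑ y, pX x * W x y *
        Real.log (pX x * W x y / (pX x * (∑ x', pX x' * W x' y))))
      ≤ ∑ x, ∑ y, (pX x * W x y - pX x * (∑ x', pX x' * W x' y)) * Real.log (W x y) := by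
  set pY : 𝒴 → ℝ := fun y => ∑ x', pX x' * W x' y
  have hpY : ∀ y, 0 < pY y := fun y =>
    sum_mul_pos_of_sum_eq_one (fun x _ => hpX0 x) hpXsum (fun x _ => hWpos x y)
  have jensen : ∀ y, ∑ x, pX x * log (W x y) ≤ log (pY y) := fun y =>
    sum_mul_log_le_log_sum_mul (fun x _ => hpX0 x) hpXsum (fun x _ => hWpos x y)
  have gap : (∑ x, ∑ y, (pX x * W x y - pX x * pY y) * log (W x y))
      - ∑ x, ∑ y, pX x * W x y * (log (W x y) - log (pY y))
      = ∑ y, pY y * (log (pY y) - ∑ x, pX x * log (W x y)) := by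
    calc _ = ∑ x, ∑ y, (pX x * W x y * log (pY y) - pY y * (pX x * log (W x y))) := by
          simp only [← sum_sub_distrib]
          exact sum_congr rfl fun x _ => sum_congr rfl fun y _ => by ring
      _ = _ := by
          rw [sum_comm]
          refine sum_congr rfl fun y _ => ?_
          rw [sum_sub_distrib, ← sum_mul, ← mul_sum, mul_sub]
  calc (∑ x, ∑ y, pX x * W x y * log (pX x * W x y / (pX x * pY y)))
      = ∑ x, ∑ y, pX x * W x y * (log (W x y) - log (pY y)) := by
        refine sum_congr rfl fun x _ => sum_congr rfl fun y _ => ?_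
        exact mul_log_mul_div_mul_left _ (hWpos x y).ne' (hpY y).ne'
    _ ≤ ∑ x, ∑ y, (pX x * W x y - pX x * pY y) * log (W x y) := by
        have gap_nonneg := sum_nonneg fun y (_ : y ∈ univ) => mul_nonneg (hpY y).le (sub_nonneg.2 (jensen y))
        linarith

/-- The mutual information of an input pmf `pX` over a strictly positive channel
`W` is bounded above by `∑ (x,y), (p(x,y) - pX x * pY y) * log (W x y)`, where
`p(x,y) = pX x * W x y` is the joint pmf and `pY` the output pmf. -/
theorem stmt_1 {𝒳 𝒴 : Type*} [Fintype 𝒳] [Fintype 𝒴]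
    (pX : 𝒳 → ℝ) (W : 𝒳 → 𝒴 → ℝ)
    (hpX0 : ∀ x, 0 ≤ pX x) (hpX1 : ∀ x, pX x ≤ 1) (hpXsum : ∑ x, pX x = 1)
    (hWpos : ∀ x y, 0 < W x y) (hWle : ∀ x y, W x y ≤ 1)
    (hWsum : ∀ x, ∑ y, W x y = 1) :
    (∑ x, ∑ y, pX x * W x y *
        Real.log (pX x * W x y / (pX x * (∑ x', pX x' * W x' y))))
      ≤ ∑ x, ∑ y, (pX x * W x y - pX x * (∑ x', pX x' * W x' y)) * Real.log (W x y) :=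
  stmt_1_general pX W hpX0 hpXsum hWpos
end

section
/- Let X be a real random variable with finite second moment, let N be independent of X with N distributed as a Gaussian with mean μ and variance σ² > 0, and set Y = X + N. Let X′ be a random variable independent of Y with the same distribution as X and finite second moment. Denote by φ(y|x) the Gaussian density with mean x + μ and variance σ² evaluated at y. Then E[log φ(Y|X)] − E[log φ(Y|X′)] = Var(X)/σ². -/
/-!
With `c = 1 / (σ√(2π))` and `Z = Y - μ = X + (N - μ)`, `log φ(Y|x) = log c - (Z - x)² / (2σ²)`,
so the left side is `(E[(Z - X')²] - E[(Z - X)²]) / (2σ²)`. Writing `E[W²] = Var W + (E W)²` and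
`Var (Z - W) = Var Z - 2 cov[Z, W] + Var W`, the two mean squared errors differ only in the
covariance term: `cov[Z, X'] = 0` because `X'` is independent of `Y`, while `cov[Z, X] = Var X`
because `N` is independent of `X`.
-/

open MeasureTheory ProbabilityTheory
open scoped NNReal ENNReal

section
variable {Ω : Type*} {mΩ : MeasurableSpace Ω} {P : Measure Ω}

lemma memLp_of_map_eq_gaussianReal {N : Ω → ℝ} {μ : ℝ} {v : ℝ≥0}
    (hN : P.map N = gaussianReal μ v) {p : ℝ≥0∞} (hp : p ≠ ∞) : MemLp N p P := by
  have hNm : AEMeasurable N P := .of_map_ne_zero (hN ▸ IsProbabilityMeasure.ne_zero _)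
  exact (memLp_map_measure_iff aestronglyMeasurable_id hNm).1 (hN ▸ memLp_id_gaussianReal' p hp)

variable [IsProbabilityMeasure P]

lemma integral_log_const_mul_exp_neg_sq_div {c : ℝ} (hc : 0 < c) {W : Ω → ℝ} (hW : MemLp W 2 P)
    (a : ℝ) :
    ∫ ω, Real.log (c * Real.exp (-W ω ^ 2 / a)) ∂P = Real.log c - (∫ ω, W ω ^ 2 ∂P) / a := by
  simp_rw [Real.log_mul hc.ne' (Real.exp_ne_zero _), Real.log_exp, neg_div]
  rw [integral_add (f := fun _ => Real.log c) (g := fun ω => -(W ω ^ 2 / a))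
    (integrable_const _) (hW.integrable_sq.div_const a).neg, integral_neg, integral_div]
  simp [sub_eq_add_neg]

lemma integral_sq_eq_variance_add_sq {W : Ω → ℝ} (hW : MemLp W 2 P) :
    ∫ ω, W ω ^ 2 ∂P = Var[W; P] + (∫ ω, W ω ∂P) ^ 2 := by
  rw [variance_eq_sub hW]
  simp [Pi.pow_apply]

lemma integral_sq_sub_eq_add_covariance_of_indepFun {Z X X' : Ω → ℝ} (hZ : MemLp Z 2 P)
    (hX : MemLp X 2 P) (hX'X : IdentDistrib X' X P P) (hX'Z : IndepFun X' Z P) :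
    ∫ ω, (Z ω - X' ω) ^ 2 ∂P = ∫ ω, (Z ω - X ω) ^ 2 ∂P + 2 * cov[Z, X; P] := by
  have hX' : MemLp X' 2 P := hX'X.symm.memLp_snd hX
  have hcov : cov[Z, X'; P] = 0 := by
    rw [covariance_comm]; exact hX'Z.covariance_eq_zero hX' hZ
  rw [integral_sq_eq_variance_add_sq (W := fun ω => Z ω - X' ω) (hZ.sub hX'),
    integral_sq_eq_variance_add_sq (W := fun ω => Z ω - X ω) (hZ.sub hX),
    variance_fun_sub hZ hX', variance_fun_sub hZ hX, hcov, hX'X.variance_eq,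
    integral_sub (hZ.integrable one_le_two) (hX'.integrable one_le_two),
    integral_sub (hZ.integrable one_le_two) (hX.integrable one_le_two), hX'X.integral_eq]
  ring

end

theorem stmt_4_general {Ω : Type*} [MeasureSpace Ω] [IsProbabilityMeasure (ℙ : Measure Ω)]
    (X N X' : Ω → ℝ) (μ : ℝ) (v : ℝ≥0) (hv : 0 < v)
    (hX2 : MemLp X 2 ℙ)
    (hNlaw : Measure.map N ℙ = gaussianReal μ v)
    (hXN : IndepFun X N ℙ)
    (hX'Y : IndepFun X' (fun ω => X ω + N ω) ℙ)
    (hlaw : Measure.map X' ℙ = Measure.map X ℙ) :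
    (∫ ω, Real.log ((1 / (Real.sqrt v * Real.sqrt (2 * Real.pi))) *
        Real.exp (-(X ω + N ω - X ω - μ) ^ 2 / (2 * v))) ∂ℙ)
      - (∫ ω, Real.log ((1 / (Real.sqrt v * Real.sqrt (2 * Real.pi))) *
          Real.exp (-(X ω + N ω - X' ω - μ) ^ 2 / (2 * v))) ∂ℙ)
      = variance X ℙ / v := by
  have hN2 : MemLp N 2 ℙ := memLp_of_map_eq_gaussianReal hNlaw (by simp)
  have hX'X : IdentDistrib X' X ℙ ℙ :=
    have := Measure.isProbabilityMeasure_map (μ := ℙ) hX2.aemeasurable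
    ⟨.of_map_ne_zero (hlaw ▸ IsProbabilityMeasure.ne_zero _), hX2.aemeasurable, hlaw⟩
  let Z : Ω → ℝ := fun ω => X ω + N ω - μ
  have hZ : MemLp Z 2 ℙ := (hX2.add hN2).sub (memLp_const μ)
  have hX'Z : IndepFun X' Z ℙ := hX'Y.comp measurable_id (measurable_sub_const μ)
  have hcov : cov[Z, X; ℙ] = Var[X; ℙ] := by
    change cov[fun ω => (X + N) ω - μ, X; ℙ] = _
    rw [covariance_sub_const_left ((hX2.add hN2).integrable one_le_two),
      covariance_add_left hX2 hN2 hX2, covariance_self hX2.aemeasurable,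
      covariance_comm, hXN.covariance_eq_zero hX2 hN2, add_zero]
  have hc : 0 < 1 / (Real.sqrt v * Real.sqrt (2 * Real.pi)) := by positivity
  have hZX : ∀ ω, X ω + N ω - X ω - μ = Z ω - X ω := fun ω => by ring
  have hZX' : ∀ ω, X ω + N ω - X' ω - μ = Z ω - X' ω := fun ω => by ring
  simp_rw [hZX, hZX']
  rw [integral_log_const_mul_exp_neg_sq_div (W := fun ω => Z ω - X ω) hc (hZ.sub hX2),
    integral_log_const_mul_exp_neg_sq_div (W := fun ω => Z ω - X' ω) hc
      (hZ.sub (hX'X.symm.memLp_snd hX2)),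
    integral_sq_sub_eq_add_covariance_of_indepFun hZ hX2 hX'X hX'Z, hcov]
  field_simp
  ring

/-- For the additive Gaussian noise channel `Y = X + N`, with
`N ~ 𝒩(μ, v)` independent of `X`, and `X'` an independent copy of `X` that is independent of `Y`,
the symmetrized KL divergence `E[log φ(Y|X)] - E[log φ(Y|X')]` equals `Var(X) / v`, where
`φ(y|x)` is the Gaussian density with mean `x + μ` and variance `v` at `y`. -/
theorem stmt_4 {Ω : Type*} [MeasureSpace Ω] [IsProbabilityMeasure (ℙ : Measure Ω)]
    (X N X' : Ω → ℝ) (μ : ℝ) (v : ℝ≥0) (hv : 0 < v)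
    (hX : Measurable X) (hN : Measurable N) (hX' : Measurable X')
    (hX2 : MemLp X 2 ℙ) (hX'2 : MemLp X' 2 ℙ)
    (hNlaw : Measure.map N ℙ = gaussianReal μ v)
    (hXN : IndepFun X N ℙ)
    (hX'Y : IndepFun X' (fun ω => X ω + N ω) ℙ)
    (hlaw : Measure.map X' ℙ = Measure.map X ℙ) :
    (∫ ω, Real.log ((1 / (Real.sqrt v * Real.sqrt (2 * Real.pi))) *
        Real.exp (-(X ω + N ω - X ω - μ) ^ 2 / (2 * v))) ∂ℙ)
      - (∫ ω, Real.log ((1 / (Real.sqrt v * Real.sqrt (2 * Real.pi))) *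
          Real.exp (-(X ω + N ω - X' ω - μ) ^ 2 / (2 * v))) ∂ℙ)
      = variance X ℙ / v :=
  stmt_4_general X N X' μ v hv hX2 hNlaw hXN hX'Y hlaw
end

section
/- Let λ₀ > 0 and A > 0, let X be a random variable with 0 ≤ X ≤ A almost surely, and let Y be a random variable that, conditionally on X = x, is Poisson distributed with parameter x + λ₀ (i.e., P(Y = y | X = x) = e^{−(x+λ₀)} (x+λ₀)^y / y! for y ∈ ℕ). Let X′ be independent of Y with the same distribution as X, and write f(y|x) = e^{−(x+λ₀)} (x+λ₀)^y / y!. Then E[log f(Y|X)] − E[log f(Y|X′)] = Cov(X + λ₀, log(X + λ₀)), where Cov(U, V) = E[U·V] − E[U]·E[V]. -/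
/-!
Write `S = X + λ₀`. Since `log f(y | x) = -(x + λ₀) + y log (x + λ₀) - log y!`, the two
expectations differ only in the middle term. Given `X`, the count `Y` has mean `S`, so
`E[Y log S] = E[S log S]`; as `X'` is independent of `Y` and distributed like `X`,
`E[Y log (X' + λ₀)] = E[Y] E[log S] = E[S] E[log S]`. Boundedness of `X` makes every term
integrable; for `log Y!` this uses `log y! ≤ y²` and the finite second moment of `Y`.
-/

open MeasureTheory ProbabilityTheory
open scoped ENNReal

-- The Poisson pmf with a real rate; Mathlib's `poissonMeasure` takes its rate in `ℝ≥0`.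
noncomputable def poissonWeight (s : ℝ) (y : ℕ) : ℝ :=
  Real.exp (-s) * s ^ y / y.factorial

theorem poissonWeight_nonneg {s : ℝ} (hs : 0 ≤ s) (y : ℕ) : 0 ≤ poissonWeight s y := by
  unfold poissonWeight
  positivity

theorem log_poissonWeight {s : ℝ} (hs : 0 < s) (y : ℕ) :
    Real.log (poissonWeight s y) = -s + y * Real.log s - Real.log y.factorial := by
  rw [poissonWeight, Real.log_div (by positivity) (by positivity),
    Real.log_mul (by positivity) (by positivity), Real.log_exp, Real.log_pow]

theorem hasSum_poissonWeight (s : ℝ) : HasSum (poissonWeight s) 1 := by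
  have h := (NormedSpace.expSeries_div_hasSum_exp s).mul_left (Real.exp (-s))
  rw [← Real.exp_eq_exp_ℝ, ← Real.exp_add, neg_add_cancel, Real.exp_zero] at h
  unfold poissonWeight
  simpa only [mul_div_assoc] using h

theorem succ_mul_poissonWeight_succ (s : ℝ) (y : ℕ) :
    (y + 1 : ℝ) * poissonWeight s (y + 1) = s * poissonWeight s y := by
  simp only [poissonWeight, Nat.factorial_succ, Nat.cast_mul, Nat.cast_succ, pow_succ]
  field_simp

theorem HasSum.natCast_mul_poissonWeight {s a : ℝ} {h : ℕ → ℝ}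
    (H : HasSum (fun y => h (y + 1) * poissonWeight s y) a) :
    HasSum (fun y : ℕ => y * h y * poissonWeight s y) (s * a) := by
  rw [← hasSum_nat_add_iff' 1, Finset.sum_range_one, Nat.cast_zero, zero_mul, zero_mul, sub_zero]
  refine (H.mul_left s).congr_fun fun y => ?_
  push_cast
  linear_combination h (y + 1) * succ_mul_poissonWeight_succ s y

theorem hasSum_natCast_mul_poissonWeight (s : ℝ) :
    HasSum (fun y : ℕ => y * poissonWeight s y) s := by
  have H := HasSum.natCast_mul_poissonWeight (s := s) (h := fun _ => 1)
    (by simpa using hasSum_poissonWeight s)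
  simpa only [mul_one] using H

theorem hasSum_natCast_sq_mul_poissonWeight (s : ℝ) :
    HasSum (fun y : ℕ => (y : ℝ) ^ 2 * poissonWeight s y) (s * (s + 1)) := by
  have H : HasSum (fun y : ℕ => ((y + 1 : ℕ) : ℝ) * poissonWeight s y) (s + 1) := by
    simpa [add_mul] using (hasSum_natCast_mul_poissonWeight s).add (hasSum_poissonWeight s)
  simpa [sq] using H.natCast_mul_poissonWeight (h := fun y => (y : ℝ))

theorem tsum_ofReal_poissonWeight_mul {s a : ℝ} (hs : 0 ≤ s) {g : ℕ → ℝ} (hg : ∀ y, 0 ≤ g y)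
    (H : HasSum (fun y => g y * poissonWeight s y) a) :
    ∑' y, ENNReal.ofReal (poissonWeight s y) * ENNReal.ofReal (g y) = ENNReal.ofReal a := by
  rw [← H.tsum_eq, ENNReal.ofReal_tsum_of_nonneg
    (fun y => mul_nonneg (hg y) (poissonWeight_nonneg hs y)) H.summable]
  congr 1 with y
  rw [← ENNReal.ofReal_mul (poissonWeight_nonneg hs y), mul_comm]

theorem log_factorial_le_sq (n : ℕ) : Real.log n.factorial ≤ (n : ℝ) ^ 2 := by
  calc Real.log n.factorial ≤ Real.log ((n : ℝ) ^ n) :=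
        Real.log_le_log (by positivity) (by exact_mod_cast n.factorial_le_pow)
    _ = n * Real.log n := Real.log_pow n n
    _ ≤ n * n := by gcongr; exact Real.log_le_self n.cast_nonneg
    _ = (n : ℝ) ^ 2 := (sq _).symm

def IsPoissonChannel {Ω : Type*} [MeasurableSpace Ω] (P : Measure Ω) (lam0 : ℝ) (X : Ω → ℝ)
    (Y : Ω → ℕ) : Prop :=
  ∀ (y : ℕ) (B : Set ℝ), MeasurableSet B →
    P {ω | X ω ∈ B ∧ Y ω = y} = ∫⁻ x in B, ENNReal.ofReal (poissonWeight (x + lam0) y) ∂P.map X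

namespace IsPoissonChannel

variable {Ω : Type*} [MeasurableSpace Ω] {P : Measure Ω} {lam0 : ℝ} {X : Ω → ℝ} {Y : Ω → ℕ}

theorem map_restrict_eq_withDensity (hch : IsPoissonChannel P lam0 X Y) (hX : Measurable X)
    (y : ℕ) : (P.restrict (Y ⁻¹' {y})).map X
      = (P.map X).withDensity fun x => ENNReal.ofReal (poissonWeight (x + lam0) y) := by
  ext B hB
  rw [Measure.map_apply hX hB, Measure.restrict_apply (hX hB), withDensity_apply _ hB]
  exact hch y B hB

theorem lintegral_comp (hch : IsPoissonChannel P lam0 X Y) (hX : Measurable X) (hY : Measurable Y)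
    {F : ℝ → ℕ → ℝ≥0∞} (hF : ∀ y, Measurable (F · y)) :
    ∫⁻ ω, F (X ω) (Y ω) ∂P
      = ∫⁻ x, ∑' y, ENNReal.ofReal (poissonWeight (x + lam0) y) * F x y ∂P.map X := by
  have hw (y : ℕ) : Measurable fun x => ENNReal.ofReal (poissonWeight (x + lam0) y) := by
    unfold poissonWeight
    fun_prop
  have hfib (y : ℕ) : MeasurableSet (Y ⁻¹' {y}) := hY (measurableSet_singleton y)
  calc ∫⁻ ω, F (X ω) (Y ω) ∂P = ∑' y, ∫⁻ ω in Y ⁻¹' {y}, F (X ω) (Y ω) ∂P := by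
        rw [← lintegral_iUnion hfib (pairwise_disjoint_fiber Y), ← Set.preimage_iUnion,
          Set.iUnion_of_singleton, Set.preimage_univ, Measure.restrict_univ]
    _ = ∑' y, ∫⁻ ω in Y ⁻¹' {y}, F (X ω) y ∂P := by
        congr 1 with y
        exact setLIntegral_congr_fun (hfib y) fun ω (hω : Y ω = y) => by rw [hω]
    _ = ∑' y, ∫⁻ x, ENNReal.ofReal (poissonWeight (x + lam0) y) * F x y ∂P.map X := by
        congr 1 with y
        rw [← lintegral_map (hF y) hX, hch.map_restrict_eq_withDensity hX,
          lintegral_withDensity_eq_lintegral_mul _ (hw y) (hF y)]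
        rfl
    _ = _ := (lintegral_tsum fun y => ((hw y).mul (hF y)).aemeasurable).symm

theorem lintegral_natCast_mul (hch : IsPoissonChannel P lam0 X Y) (hX : Measurable X)
    (hY : Measurable Y) (hs : ∀ᵐ x ∂P.map X, 0 ≤ x + lam0) {g : ℝ → ℝ≥0∞} (hg : Measurable g) :
    ∫⁻ ω, Y ω * g (X ω) ∂P = ∫⁻ ω, ENNReal.ofReal (X ω + lam0) * g (X ω) ∂P := by
  rw [hch.lintegral_comp hX hY (F := fun x y => y * g x) fun _ => hg.const_mul _,
    ← lintegral_map (f := fun x => ENNReal.ofReal (x + lam0) * g x) (by fun_prop) hX]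
  refine lintegral_congr_ae (hs.mono fun x hx => ?_)
  dsimp only
  have hmean := tsum_ofReal_poissonWeight_mul hx (fun y => y.cast_nonneg)
    (hasSum_natCast_mul_poissonWeight (x + lam0))
  simp only [ENNReal.ofReal_natCast] at hmean
  rw [← hmean, ← ENNReal.tsum_mul_right]
  simp only [mul_assoc]

theorem integrable_natCast_mul (hch : IsPoissonChannel P lam0 X Y) (hX : Measurable X)
    (hY : Measurable Y) (hs : ∀ᵐ x ∂P.map X, 0 ≤ x + lam0) {G : ℝ → ℝ} (hG : Measurable G)
    (hint : Integrable (fun ω => (X ω + lam0) * G (X ω)) P) :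
    Integrable (fun ω => (Y ω : ℝ) * G (X ω)) P := by
  refine ⟨(by fun_prop : Measurable _).aestronglyMeasurable, ?_⟩
  have h : ∫⁻ ω, ‖(Y ω : ℝ) * G (X ω)‖ₑ ∂P = ∫⁻ ω, ‖(X ω + lam0) * G (X ω)‖ₑ ∂P := by
    simp only [enorm_mul, Real.enorm_natCast]
    rw [hch.lintegral_natCast_mul hX hY hs hG.enorm]
    exact lintegral_congr_ae ((ae_of_ae_map hX.aemeasurable hs).mono fun ω hω => by
      simp only [Real.enorm_of_nonneg hω])
  exact (hasFiniteIntegral_def _ _).2 (h ▸ hint.2)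

theorem lintegral_ofReal_natCast_mul (hch : IsPoissonChannel P lam0 X Y) (hX : Measurable X)
    (hY : Measurable Y) (hs : ∀ᵐ x ∂P.map X, 0 ≤ x + lam0) {G : ℝ → ℝ} (hG : Measurable G) :
    ∫⁻ ω, ENNReal.ofReal (Y ω * G (X ω)) ∂P
      = ∫⁻ ω, ENNReal.ofReal ((X ω + lam0) * G (X ω)) ∂P := by
  simp only [ENNReal.ofReal_mul (Nat.cast_nonneg _), ENNReal.ofReal_natCast]
  rw [hch.lintegral_natCast_mul hX hY hs (g := fun x => ENNReal.ofReal (G x)) hG.ennreal_ofReal]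
  exact lintegral_congr_ae ((ae_of_ae_map hX.aemeasurable hs).mono fun ω hω =>
    (ENNReal.ofReal_mul hω).symm)

theorem integral_natCast_mul (hch : IsPoissonChannel P lam0 X Y) (hX : Measurable X)
    (hY : Measurable Y) (hs : ∀ᵐ x ∂P.map X, 0 ≤ x + lam0) {G : ℝ → ℝ} (hG : Measurable G)
    (hint : Integrable (fun ω => (X ω + lam0) * G (X ω)) P) :
    ∫ ω, (Y ω : ℝ) * G (X ω) ∂P = ∫ ω, (X ω + lam0) * G (X ω) ∂P := by
  rw [integral_eq_lintegral_pos_part_sub_lintegral_neg_part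
      (hch.integrable_natCast_mul hX hY hs hG hint),
    integral_eq_lintegral_pos_part_sub_lintegral_neg_part hint]
  simp only [← mul_neg]
  rw [hch.lintegral_ofReal_natCast_mul hX hY hs hG,
    hch.lintegral_ofReal_natCast_mul hX hY hs (G := fun x => -G x) hG.neg]

theorem integrable_natCast_sq (hch : IsPoissonChannel P lam0 X Y) (hX : Measurable X)
    (hY : Measurable Y) (hs : ∀ᵐ x ∂P.map X, 0 ≤ x + lam0)
    (hint : Integrable (fun ω => (X ω + lam0) * (X ω + lam0 + 1)) P) :
    Integrable (fun ω => (Y ω : ℝ) ^ 2) P := by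
  refine ⟨(by fun_prop : Measurable _).aestronglyMeasurable, ?_⟩
  have h : ∫⁻ ω, ‖(Y ω : ℝ) ^ 2‖ₑ ∂P = ∫⁻ ω, ‖(X ω + lam0) * (X ω + lam0 + 1)‖ₑ ∂P := by
    rw [hch.lintegral_comp hX hY (F := fun _ y => ‖(y : ℝ) ^ 2‖ₑ) fun _ => measurable_const,
      ← lintegral_map (f := fun x => ‖(x + lam0) * (x + lam0 + 1)‖ₑ) (by fun_prop) hX]
    refine lintegral_congr_ae (hs.mono fun x hx => ?_)
    have hx' : 0 ≤ (x + lam0) * (x + lam0 + 1) := by positivity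
    simp only [Real.enorm_of_nonneg (sq_nonneg _), Real.enorm_of_nonneg hx']
    exact tsum_ofReal_poissonWeight_mul hx (fun y => sq_nonneg _)
      (hasSum_natCast_sq_mul_poissonWeight (x + lam0))
  exact (hasFiniteIntegral_def _ _).2 (h ▸ hint.2)

theorem integrable_natCast (hch : IsPoissonChannel P lam0 X Y) (hX : Measurable X)
    (hY : Measurable Y) (hs : ∀ᵐ x ∂P.map X, 0 ≤ x + lam0)
    (hint : Integrable (fun ω => X ω + lam0) P) : Integrable (fun ω => (Y ω : ℝ)) P := by
  simpa using hch.integrable_natCast_mul hX hY hs (G := 1) measurable_const (by simpa using hint)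

theorem integral_natCast (hch : IsPoissonChannel P lam0 X Y) (hX : Measurable X)
    (hY : Measurable Y) (hs : ∀ᵐ x ∂P.map X, 0 ≤ x + lam0)
    (hint : Integrable (fun ω => X ω + lam0) P) :
    ∫ ω, (Y ω : ℝ) ∂P = ∫ ω, X ω + lam0 ∂P := by
  simpa using hch.integral_natCast_mul hX hY hs (G := 1) measurable_const (by simpa using hint)

end IsPoissonChannel

section

variable {Ω : Type*} [MeasurableSpace Ω] {P : Measure Ω}

theorem integrable_comp_of_ae_mem_isCompact [IsFiniteMeasure P] {α E : Type*}
    [TopologicalSpace α] [NormedAddCommGroup E] {Z : Ω → α} {K : Set α} (hK : IsCompact K)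
    (hZK : ∀ᵐ ω ∂P, Z ω ∈ K) {φ : α → E} (hφ : ContinuousOn φ K)
    (hφZ : AEStronglyMeasurable (fun ω => φ (Z ω)) P) :
    Integrable (fun ω => φ (Z ω)) P :=
  let ⟨C, hC⟩ := hK.exists_bound_of_continuousOn hφ
  .of_bound hφZ C (hZK.mono fun _ h => hC _ h)

theorem integral_log_poissonWeight {Z : Ω → ℝ} {Y : Ω → ℕ} (hZ : ∀ᵐ ω ∂P, 0 < Z ω)
    (hZi : Integrable Z P) (hYZ : Integrable (fun ω => (Y ω : ℝ) * Real.log (Z ω)) P)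
    (hfac : Integrable (fun ω => Real.log (Y ω).factorial) P) :
    ∫ ω, Real.log (poissonWeight (Z ω) (Y ω)) ∂P
      = -∫ ω, Z ω ∂P + ∫ ω, (Y ω : ℝ) * Real.log (Z ω) ∂P
        - ∫ ω, Real.log (Y ω).factorial ∂P := by
  rw [integral_congr_ae (hZ.mono fun ω h => log_poissonWeight h (Y ω)),
    integral_sub (f := fun ω => -Z ω + Y ω * Real.log (Z ω)) (hZi.neg.add hYZ) hfac,
    integral_add (f := fun ω => -Z ω) hZi.neg hYZ, integral_neg]

theorem integrable_log_factorial_of_integrable_sq {Y : Ω → ℕ} (hY : Measurable Y)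
    (hY2 : Integrable (fun ω => (Y ω : ℝ) ^ 2) P) :
    Integrable (fun ω => Real.log (Y ω).factorial) P :=
  hY2.mono' (by fun_prop : Measurable _).aestronglyMeasurable <| .of_forall fun ω => by
    rw [Real.norm_of_nonneg (Real.log_nonneg (Nat.one_le_cast.mpr (Y ω).factorial_pos))]
    exact log_factorial_le_sq (Y ω)

theorem IsPoissonChannel.integrable_log_factorial [IsFiniteMeasure P] {lam0 A : ℝ}
    {X : Ω → ℝ} {Y : Ω → ℕ} (hch : IsPoissonChannel P lam0 X Y) (hX : Measurable X)
    (hY : Measurable Y) (hlam0 : 0 ≤ lam0) (hXK : ∀ᵐ x ∂P.map X, x ∈ Set.Icc 0 A) :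
    Integrable (fun ω => Real.log (Y ω).factorial) P :=
  integrable_log_factorial_of_integrable_sq hY <|
    hch.integrable_natCast_sq hX hY (hXK.mono fun x hx => by linarith [hx.1]) <|
      integrable_comp_of_ae_mem_isCompact isCompact_Icc (ae_of_ae_map hX.aemeasurable hXK)
        (φ := fun x => (x + lam0) * (x + lam0 + 1)) (by fun_prop) (by fun_prop)

theorem IsPoissonChannel.integral_log_likelihood [IsFiniteMeasure P] {lam0 A : ℝ}
    {X : Ω → ℝ} {Y : Ω → ℕ} (hch : IsPoissonChannel P lam0 X Y) (hX : Measurable X)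
    (hY : Measurable Y) (hlam0 : 0 < lam0) (hXK : ∀ᵐ x ∂P.map X, x ∈ Set.Icc 0 A) :
    ∫ ω, Real.log (poissonWeight (X ω + lam0) (Y ω)) ∂P
      = -∫ ω, X ω + lam0 ∂P + ∫ ω, (X ω + lam0) * Real.log (X ω + lam0) ∂P
        - ∫ ω, Real.log (Y ω).factorial ∂P := by
  have hXK' := ae_of_ae_map hX.aemeasurable hXK
  have hs : ∀ᵐ x ∂P.map X, 0 ≤ x + lam0 := hXK.mono fun x hx => by linarith [hx.1]
  have hLm : Measurable fun x => Real.log (x + lam0) := by fun_prop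
  have hSL : Integrable (fun ω => (X ω + lam0) * Real.log (X ω + lam0)) P :=
    integrable_comp_of_ae_mem_isCompact isCompact_Icc hXK'
      (Real.continuous_mul_log.comp (continuous_add_const lam0)).continuousOn (by fun_prop)
  have hS : Integrable (fun ω => X ω + lam0) P :=
    integrable_comp_of_ae_mem_isCompact isCompact_Icc hXK' (φ := (· + lam0))
      (by fun_prop) (by fun_prop)
  rw [integral_log_poissonWeight (hXK'.mono fun ω h => by linarith [h.1]) hS
      (hch.integrable_natCast_mul hX hY hs hLm hSL)
      (hch.integrable_log_factorial hX hY hlam0.le hXK),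
    hch.integral_natCast_mul hX hY hs hLm hSL]

theorem IsPoissonChannel.integral_log_likelihood_of_indepFun [IsFiniteMeasure P] {lam0 A : ℝ}
    {X X' : Ω → ℝ} {Y : Ω → ℕ} (hch : IsPoissonChannel P lam0 X Y) (hX : Measurable X)
    (hX' : Measurable X') (hY : Measurable Y) (hlam0 : 0 < lam0)
    (hXK : ∀ᵐ x ∂P.map X, x ∈ Set.Icc 0 A) (hindep : IndepFun X' Y P)
    (hlaw : P.map X' = P.map X) :
    ∫ ω, Real.log (poissonWeight (X' ω + lam0) (Y ω)) ∂P
      = -∫ ω, X ω + lam0 ∂P + (∫ ω, X ω + lam0 ∂P) * ∫ ω, Real.log (X ω + lam0) ∂P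
        - ∫ ω, Real.log (Y ω).factorial ∂P := by
  have hid : IdentDistrib X' X P P := ⟨hX'.aemeasurable, hX.aemeasurable, hlaw⟩
  have hX'K := ae_of_ae_map hX'.aemeasurable (hlaw ▸ hXK)
  have hs : ∀ᵐ x ∂P.map X, 0 ≤ x + lam0 := hXK.mono fun x hx => by linarith [hx.1]
  have hLm : Measurable fun x => Real.log (x + lam0) := by fun_prop
  have hS : Integrable (fun ω => X ω + lam0) P :=
    integrable_comp_of_ae_mem_isCompact isCompact_Icc (ae_of_ae_map hX.aemeasurable hXK)
      (φ := (· + lam0)) (by fun_prop) (by fun_prop)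
  have hS' : Integrable (fun ω => X' ω + lam0) P :=
    integrable_comp_of_ae_mem_isCompact isCompact_Icc hX'K (φ := (· + lam0))
      (by fun_prop) (by fun_prop)
  have hL' : Integrable (fun ω => Real.log (X' ω + lam0)) P :=
    integrable_comp_of_ae_mem_isCompact isCompact_Icc hX'K (φ := fun x => Real.log (x + lam0))
      (ContinuousOn.log (by fun_prop) fun x hx => by linarith [hx.1])
      (hLm.comp hX').aestronglyMeasurable
  have hYL' := (hindep.symm.comp measurable_from_top hLm).integrable_mul
    (hch.integrable_natCast hX hY hs hS) hL'
  have hS'eq : ∫ ω, X' ω + lam0 ∂P = ∫ ω, X ω + lam0 ∂P :=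
    (hid.comp (measurable_add_const lam0)).integral_eq
  have hL'eq : ∫ ω, Real.log (X' ω + lam0) ∂P = ∫ ω, Real.log (X ω + lam0) ∂P :=
    (hid.comp hLm).integral_eq
  rw [integral_log_poissonWeight (hX'K.mono fun ω h => by linarith [h.1]) hS' hYL'
      (hch.integrable_log_factorial hX hY hlam0.le hXK),
    hindep.symm.integral_fun_comp_mul_comp hY.aemeasurable hX'.aemeasurable (by fun_prop)
      hLm.aestronglyMeasurable, hch.integral_natCast hX hY hs hS, hS'eq, hL'eq]

end

theorem stmt_5_general {Ω : Type*} [MeasureSpace Ω] [IsProbabilityMeasure (ℙ : Measure Ω)]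
    (lam0 A : ℝ) (hlam0 : 0 < lam0)
    (X X' : Ω → ℝ) (Y : Ω → ℕ)
    (hX : Measurable X) (hX' : Measurable X') (hY : Measurable Y)
    (hXbd : ∀ᵐ ω ∂ℙ, 0 ≤ X ω ∧ X ω ≤ A)
    (hcond : ∀ (y : ℕ) (B : Set ℝ), MeasurableSet B →
      ℙ {ω | X ω ∈ B ∧ Y ω = y}
        = ∫⁻ x in B,
            ENNReal.ofReal (Real.exp (-(x + lam0)) * (x + lam0) ^ y / (Nat.factorial y))
            ∂(Measure.map X ℙ))
    (hindep : IndepFun X' Y ℙ)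
    (hlaw : Measure.map X' ℙ = Measure.map X ℙ) :
    (∫ ω, Real.log (Real.exp (-(X ω + lam0)) * (X ω + lam0) ^ (Y ω)
          / (Nat.factorial (Y ω))) ∂ℙ)
      - (∫ ω, Real.log (Real.exp (-(X' ω + lam0)) * (X' ω + lam0) ^ (Y ω)
          / (Nat.factorial (Y ω))) ∂ℙ)
      = (∫ ω, (X ω + lam0) * Real.log (X ω + lam0) ∂ℙ)
        - (∫ ω, (X ω + lam0) ∂ℙ) * (∫ ω, Real.log (X ω + lam0) ∂ℙ) := by
  change ∫ ω, Real.log (poissonWeight (X ω + lam0) (Y ω)) ∂ℙ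
    - ∫ ω, Real.log (poissonWeight (X' ω + lam0) (Y ω)) ∂ℙ = _
  have hch : IsPoissonChannel ℙ lam0 X Y := hcond
  have hXK : ∀ᵐ x ∂Measure.map X ℙ, x ∈ Set.Icc 0 A :=
    (ae_map_iff hX.aemeasurable measurableSet_Icc).2 hXbd
  rw [hch.integral_log_likelihood hX hY hlam0 hXK,
    hch.integral_log_likelihood_of_indepFun hX hX' hY hlam0 hXK hindep hlaw]
  ring

/-- For the Poisson channel `Y ~ Poisson(X + λ₀)` with input `X` bounded in
`[0, A]`, and `X'` an independent copy of `X` that is independent of `Y`, the symmetrized KL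
divergence `E[log f(Y|X)] - E[log f(Y|X')]` equals `Cov(X + λ₀, log (X + λ₀))`, where
`f(y|x) = exp (-(x+λ₀)) * (x+λ₀)^y / y!`. -/
theorem stmt_5 {Ω : Type*} [MeasureSpace Ω] [IsProbabilityMeasure (ℙ : Measure Ω)]
    (lam0 A : ℝ) (hlam0 : 0 < lam0) (hA : 0 < A)
    (X X' : Ω → ℝ) (Y : Ω → ℕ)
    (hX : Measurable X) (hX' : Measurable X') (hY : Measurable Y)
    (hXbd : ∀ᵐ ω ∂ℙ, 0 ≤ X ω ∧ X ω ≤ A)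
    (hcond : ∀ (y : ℕ) (B : Set ℝ), MeasurableSet B →
      ℙ {ω | X ω ∈ B ∧ Y ω = y}
        = ∫⁻ x in B,
            ENNReal.ofReal (Real.exp (-(x + lam0)) * (x + lam0) ^ y / (Nat.factorial y))
            ∂(Measure.map X ℙ))
    (hindep : IndepFun X' Y ℙ)
    (hlaw : Measure.map X' ℙ = Measure.map X ℙ) :
    (∫ ω, Real.log (Real.exp (-(X ω + lam0)) * (X ω + lam0) ^ (Y ω)
          / (Nat.factorial (Y ω))) ∂ℙ)
      - (∫ ω, Real.log (Real.exp (-(X' ω + lam0)) * (X' ω + lam0) ^ (Y ω)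
          / (Nat.factorial (Y ω))) ∂ℙ)
      = (∫ ω, (X ω + lam0) * Real.log (X ω + lam0) ∂ℙ)
        - (∫ ω, (X ω + lam0) ∂ℙ) * (∫ ω, Real.log (X ω + lam0) ∂ℙ) :=
  stmt_5_general lam0 A hlam0 X X' Y hX hX' hY hXbd hcond hindep hlaw
end

section
/- Let λ₀ > 0, A > 0, and 0 < α ≤ A. Let X be a random variable with 0 ≤ X ≤ A almost surely and E[X] ≤ α. Then Cov(X + λ₀, log(X + λ₀)) ≤ (α/A)(A − α)·log(A/λ₀ + 1) if α ≤ A/2, and Cov(X + λ₀, log(X + λ₀)) ≤ (A/4)·log(A/λ₀ + 1) if α ≥ A/2. -/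
/-!
Put `Y = X + λ₀ ∈ [a, b] = [λ₀, A + λ₀]` and `f = log`, monotone and concave on `[a, b]`.
Pointwise `(Y - a)(f Y - f b) ≤ 0` bounds `E[Y f Y]` from above, and the chord of `f` over
`[a, b]` bounds `E[f Y]` from below; together
`Cov(Y, f Y) ≤ (E Y - a)(b - E Y) (f b - f a)/(b - a) = μ (A - μ) log (A/λ₀ + 1) / A`
with `μ = E X`. Finally `μ (A - μ)` is increasing for `μ ≤ A/2` and at most `A²/4`.
-/

open MeasureTheory ProbabilityTheory Set

theorem ConcaveOn.add_mul_slope_le {s : Set ℝ} {f : ℝ → ℝ} (hf : ConcaveOn ℝ s f) {a b y : ℝ}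
    (ha : a ∈ s) (hb : b ∈ s) (hab : a < b) (hy : y ∈ Icc a b) :
    f a + (y - a) * ((f b - f a) / (b - a)) ≤ f y := by
  have hba : 0 < b - a := sub_pos.mpr hab
  have hchord := hf.2 ha hb (div_nonneg (sub_nonneg.mpr hy.2) hba.le)
    (div_nonneg (sub_nonneg.mpr hy.1) hba.le)
    (by rw [← add_div, div_eq_one_iff_eq hba.ne']; ring)
  have hy_eq : ((b - y) / (b - a)) • a + ((y - a) / (b - a)) • b = y := by
    simp only [smul_eq_mul]; field_simp; ring
  rw [hy_eq, smul_eq_mul, smul_eq_mul] at hchord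
  calc f a + (y - a) * ((f b - f a) / (b - a))
      = (b - y) / (b - a) * f a + (y - a) / (b - a) * f b := by field_simp; ring
    _ ≤ f y := hchord

section

variable {Ω : Type*} [MeasurableSpace Ω] {μ : Measure Ω} [IsProbabilityMeasure μ]
  {Y : Ω → ℝ} {f : ℝ → ℝ} {a b : ℝ}

theorem integral_mul_comp_sub_le_of_concaveOn (hY : AEMeasurable Y μ) (hf : Measurable f)
    (hmono : MonotoneOn f (Icc a b)) (hconc : ConcaveOn ℝ (Icc a b) f) (hab : a < b)
    (hbd : ∀ᵐ ω ∂μ, Y ω ∈ Icc a b) :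
    ∫ ω, Y ω * f (Y ω) ∂μ - (∫ ω, Y ω ∂μ) * ∫ ω, f (Y ω) ∂μ
      ≤ (∫ ω, Y ω ∂μ - a) * (b - ∫ ω, Y ω ∂μ) * ((f b - f a) / (b - a)) := by
  have ha : a ∈ Icc a b := left_mem_Icc.mpr hab.le
  have hb : b ∈ Icc a b := right_mem_Icc.mpr hab.le
  have hY_bd : ∀ᵐ ω ∂μ, ‖Y ω‖ ≤ max |a| |b| :=
    hbd.mono fun _ h => abs_le_max_abs_abs h.1 h.2
  have hfY_bd : ∀ᵐ ω ∂μ, ‖f (Y ω)‖ ≤ max |f a| |f b| :=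
    hbd.mono fun _ h => abs_le_max_abs_abs (hmono ha h h.1) (hmono h hb h.2)
  have hY_int : Integrable Y μ := .of_bound hY.aestronglyMeasurable _ hY_bd
  have hfY_int : Integrable (fun ω => f (Y ω)) μ :=
    .of_bound (hf.comp_aemeasurable hY).aestronglyMeasurable _ hfY_bd
  have hprod_int : Integrable (fun ω => Y ω * f (Y ω)) μ :=
    hfY_int.bdd_mul hY.aestronglyMeasurable hY_bd
  set m := ∫ ω, Y ω ∂μ
  set I := ∫ ω, f (Y ω) ∂μ
  set s := (f b - f a) / (b - a)
  have hm : a ≤ m := by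
    simpa using integral_mono_ae (integrable_const a) hY_int (hbd.mono fun _ h => h.1)
  have h_upper : ∫ ω, Y ω * f (Y ω) ∂μ ≤ f b * m + a * I - a * f b := by
    have h_int₁ : Integrable (fun ω => f b * Y ω + a * f (Y ω)) μ :=
      (hY_int.const_mul _).add (hfY_int.const_mul _)
    have h_int : Integrable (fun ω => f b * Y ω + a * f (Y ω) - a * f b) μ :=
      h_int₁.sub (integrable_const _)
    calc ∫ ω, Y ω * f (Y ω) ∂μ ≤ ∫ ω, f b * Y ω + a * f (Y ω) - a * f b ∂μ :=
          integral_mono_ae hprod_int h_int <| hbd.mono fun ω h => by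
            nlinarith [mul_nonpos_of_nonneg_of_nonpos (sub_nonneg.mpr h.1)
              (sub_nonpos.mpr (hmono h hb h.2))]
      _ = f b * m + a * I - a * f b := by
        rw [integral_sub h_int₁ (integrable_const _),
          integral_add (hY_int.const_mul _) (hfY_int.const_mul _), integral_const_mul,
          integral_const_mul, integral_const, probReal_univ, one_smul]
  have h_lower : f a + (m - a) * s ≤ I := by
    have h_int₁ : Integrable (fun ω => (Y ω - a) * s) μ :=
      (hY_int.sub (integrable_const _)).mul_const _
    have h_int : Integrable (fun ω => f a + (Y ω - a) * s) μ :=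
      (integrable_const _).add h_int₁
    calc f a + (m - a) * s = ∫ ω, f a + (Y ω - a) * s ∂μ := by
          rw [integral_add (integrable_const _) h_int₁,
            integral_mul_const, integral_sub hY_int (integrable_const _), integral_const,
            integral_const, probReal_univ, one_smul, one_smul]
      _ ≤ I := integral_mono_ae h_int hfY_int <|
          hbd.mono fun ω h => hconc.add_mul_slope_le ha hb hab h
  calc ∫ ω, Y ω * f (Y ω) ∂μ - m * I ≤ (m - a) * (f b - I) := by linear_combination h_upper
    _ ≤ (m - a) * (f b - (f a + (m - a) * s)) := by gcongr
    _ = (m - a) * (b - m) * s := by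
      have : f b - f a = (b - a) * s := by simp only [s]; field_simp [(sub_pos.mpr hab).ne']
      linear_combination (m - a) * this

end

theorem stmt_6_general {Ω : Type*} [MeasureSpace Ω] [IsProbabilityMeasure (ℙ : Measure Ω)]
    (lam0 A α : ℝ) (hlam0 : 0 < lam0) (hA : 0 < A)
    (X : Ω → ℝ) (hX : Measurable X)
    (hXbd : ∀ᵐ ω ∂ℙ, 0 ≤ X ω ∧ X ω ≤ A)
    (hmean : ∫ ω, X ω ∂ℙ ≤ α) :
    (α ≤ A / 2 →
      (∫ ω, (X ω + lam0) * Real.log (X ω + lam0) ∂ℙ)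
          - (∫ ω, (X ω + lam0) ∂ℙ) * (∫ ω, Real.log (X ω + lam0) ∂ℙ)
        ≤ α / A * (A - α) * Real.log (A / lam0 + 1)) ∧
    (A / 2 ≤ α →
      (∫ ω, (X ω + lam0) * Real.log (X ω + lam0) ∂ℙ)
          - (∫ ω, (X ω + lam0) ∂ℙ) * (∫ ω, Real.log (X ω + lam0) ∂ℙ)
        ≤ A / 4 * Real.log (A / lam0 + 1)) := by
  have hX_int : Integrable X := .of_bound hX.aestronglyMeasurable A <|
    hXbd.mono fun _ h => abs_le.mpr ⟨by linarith [h.1], h.2⟩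
  set m := ∫ ω, X ω ∂ℙ
  have hm : 0 ≤ m := integral_nonneg_of_ae <| hXbd.mono fun _ h => h.1
  have h_shift : ∫ ω, (X ω + lam0) ∂ℙ = m + lam0 := by
    rw [integral_add hX_int (integrable_const _), integral_const, probReal_univ, one_smul]
  have h_log : Real.log (A + lam0) - Real.log lam0 = Real.log (A / lam0 + 1) := by
    rw [← Real.log_div (by positivity) hlam0.ne']
    congr 1
    field_simp
  have hL : 0 ≤ Real.log (A / lam0 + 1) := Real.log_nonneg (by linarith [div_pos hA hlam0])
  have hcov := integral_mul_comp_sub_le_of_concaveOn (hX.add_const lam0).aemeasurable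
    Real.measurable_log (Real.strictMonoOn_log.monotoneOn.mono fun _ h => hlam0.trans_le h.1)
    (strictConcaveOn_log_Ioi.concaveOn.subset (fun _ h => hlam0.trans_le h.1) (convex_Icc _ _))
    (by linarith : lam0 < A + lam0)
    (hXbd.mono fun _ h => ⟨by linarith [h.1], by linarith [h.2]⟩)
  rw [h_shift, h_log, add_sub_cancel_right, add_sub_add_right_eq_sub, add_sub_cancel_right,
    ← mul_div_assoc, mul_div_right_comm] at hcov
  rw [h_shift]
  refine ⟨fun hα => hcov.trans ?_, fun hα => hcov.trans ?_⟩
  · have hq : m * (A - m) ≤ α * (A - α) := by nlinarith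
    calc m * (A - m) / A * Real.log (A / lam0 + 1)
        ≤ α * (A - α) / A * Real.log (A / lam0 + 1) := by gcongr
      _ = α / A * (A - α) * Real.log (A / lam0 + 1) := by ring
  · have hq : m * (A - m) ≤ A ^ 2 / 4 := by nlinarith [sq_nonneg (A - 2 * m)]
    calc m * (A - m) / A * Real.log (A / lam0 + 1)
        ≤ A ^ 2 / 4 / A * Real.log (A / lam0 + 1) := by gcongr
      _ = A / 4 * Real.log (A / lam0 + 1) := by field_simp

/-- If `0 ≤ X ≤ A` almost surely and `E[X] ≤ α` (with `0 < λ₀`, `0 < α ≤ A`),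
then `Cov(X + λ₀, log (X + λ₀)) ≤ (α/A)(A-α) log (A/λ₀ + 1)` when `α ≤ A/2`, and
`Cov(X + λ₀, log (X + λ₀)) ≤ (A/4) log (A/λ₀ + 1)` when `α ≥ A/2`. -/
theorem stmt_6 {Ω : Type*} [MeasureSpace Ω] [IsProbabilityMeasure (ℙ : Measure Ω)]
    (lam0 A α : ℝ) (hlam0 : 0 < lam0) (hA : 0 < A) (hα : 0 < α) (hαA : α ≤ A)
    (X : Ω → ℝ) (hX : Measurable X)
    (hXbd : ∀ᵐ ω ∂ℙ, 0 ≤ X ω ∧ X ω ≤ A)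
    (hmean : ∫ ω, X ω ∂ℙ ≤ α) :
    (α ≤ A / 2 →
      (∫ ω, (X ω + lam0) * Real.log (X ω + lam0) ∂ℙ)
          - (∫ ω, (X ω + lam0) ∂ℙ) * (∫ ω, Real.log (X ω + lam0) ∂ℙ)
        ≤ α / A * (A - α) * Real.log (A / lam0 + 1)) ∧
    (A / 2 ≤ α →
      (∫ ω, (X ω + lam0) * Real.log (X ω + lam0) ∂ℙ)
          - (∫ ω, (X ω + lam0) ∂ℙ) * (∫ ω, Real.log (X ω + lam0) ∂ℙ)
        ≤ A / 4 * Real.log (A / lam0 + 1)) :=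
  stmt_6_general lam0 A α hlam0 hA X hX hXbd hmean
end

section
/- Let λ₀ > 0, A > 0, and 0 < α ≤ A, and set β = min(α, A/2)/A. Let X be the two-point random variable with P(X = A) = β and P(X = 0) = 1 − β. Then 0 ≤ X ≤ A, E[X] ≤ α, and Cov(X + λ₀, log(X + λ₀)) = β(1 − β)·A·log(A/λ₀ + 1); in particular this equals (α/A)(A − α)·log(A/λ₀ + 1) when α ≤ A/2 and (A/4)·log(A/λ₀ + 1) when α ≥ A/2, so the bounds in the preceding inequality are attained. -/
/-!
A random variable taking only the values `a` and `b`, with `P(X = a) = p`, satisfies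
`Cov(g X, h X) = p (1 - p) (g a - g b) (h a - h b)`. For `g x = x + λ₀`, `h x = log (x + λ₀)`,
`a = A`, `b = 0` this is `β (1 - β) A log (A / λ₀ + 1)`, and `E[X] = β A = min(α, A/2)`.
-/

open MeasureTheory ProbabilityTheory

section TwoPoint

variable {Ω α : Type*} [MeasurableSpace Ω] {μ : Measure Ω} [MeasurableSpace α]
  [MeasurableSingletonClass α] {X : Ω → α} {a b : α}

theorem ae_eq_or_eq_of_measure_add_eq_one [IsProbabilityMeasure μ] (hX : Measurable X)
    (hab : a ≠ b) (h : μ {ω | X ω = a} + μ {ω | X ω = b} = 1) :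
    ∀ᵐ ω ∂μ, X ω = a ∨ X ω = b := by
  have hA : MeasurableSet {ω | X ω = a} := hX (measurableSet_singleton a)
  have hB : MeasurableSet {ω | X ω = b} := hX (measurableSet_singleton b)
  have hunion : μ ({ω | X ω = a} ∪ {ω | X ω = b}) = 1 := by
    rw [measure_union (Set.disjoint_left.mpr fun _ ha hb => hab (ha.symm.trans hb)) hB, h]
  exact (ae_iff_measure_eq (hA.union hB).nullMeasurableSet).mpr (hunion.trans measure_univ.symm)

theorem integral_comp_of_ae_eq_or_eq [IsFiniteMeasure μ] {E : Type*} [NormedAddCommGroup E]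
    [NormedSpace ℝ E] [CompleteSpace E] (hX : Measurable X) (hab : a ≠ b)
    (hXab : ∀ᵐ ω ∂μ, X ω = a ∨ X ω = b) (f : α → E) :
    ∫ ω, f (X ω) ∂μ = μ.real {ω | X ω = a} • f a + μ.real {ω | X ω = b} • f b := by
  have hA : MeasurableSet {ω | X ω = a} := hX (measurableSet_singleton a)
  have hB : MeasurableSet {ω | X ω = b} := hX (measurableSet_singleton b)
  have hsplit : (fun ω => f (X ω)) =ᵐ[μ] fun ω =>
      {ω | X ω = a}.indicator (fun _ => f a) ω + {ω | X ω = b}.indicator (fun _ => f b) ω := by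
    filter_upwards [hXab] with ω hω
    rcases hω with h | h
    · simp [Set.indicator, h, hab]
    · simp [Set.indicator, h, hab.symm]
  rw [integral_congr_ae hsplit, integral_add ((integrable_const _).indicator hA)
    ((integrable_const _).indicator hB), integral_indicator_const _ hA,
    integral_indicator_const _ hB]

theorem measureReal_add_measureReal_eq_one_of_ae_eq_or_eq [IsProbabilityMeasure μ]
    (hX : Measurable X) (hab : a ≠ b) (hXab : ∀ᵐ ω ∂μ, X ω = a ∨ X ω = b) :
    μ.real {ω | X ω = a} + μ.real {ω | X ω = b} = 1 := by
  simpa using (integral_comp_of_ae_eq_or_eq hX hab hXab fun _ => (1 : ℝ)).symm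

theorem integral_mul_sub_integral_mul_integral_of_ae_eq_or_eq [IsProbabilityMeasure μ]
    (hX : Measurable X) (hab : a ≠ b) (hXab : ∀ᵐ ω ∂μ, X ω = a ∨ X ω = b) (g h : α → ℝ) :
    (∫ ω, g (X ω) * h (X ω) ∂μ) - (∫ ω, g (X ω) ∂μ) * (∫ ω, h (X ω) ∂μ)
      = μ.real {ω | X ω = a} * (1 - μ.real {ω | X ω = a}) * (g a - g b) * (h a - h b) := by
  have hq : μ.real {ω | X ω = b} = 1 - μ.real {ω | X ω = a} := by
    linarith [measureReal_add_measureReal_eq_one_of_ae_eq_or_eq hX hab hXab]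
  rw [integral_comp_of_ae_eq_or_eq hX hab hXab (fun x => g x * h x),
    integral_comp_of_ae_eq_or_eq hX hab hXab g, integral_comp_of_ae_eq_or_eq hX hab hXab h, hq]
  simp only [smul_eq_mul]
  ring

end TwoPoint

theorem stmt_7_general {Ω : Type*} [MeasureSpace Ω] [IsProbabilityMeasure (ℙ : Measure Ω)]
    (lam0 A α : ℝ) (hlam0 : 0 < lam0) (hA : 0 < A) (hα : 0 < α)
    (β : ℝ) (hβ : β = min α (A / 2) / A)
    (X : Ω → ℝ) (hX : Measurable X)
    (hPA : ℙ {ω | X ω = A} = ENNReal.ofReal β)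
    (hP0 : ℙ {ω | X ω = 0} = ENNReal.ofReal (1 - β)) :
    (∀ᵐ ω ∂ℙ, 0 ≤ X ω ∧ X ω ≤ A) ∧
    (∫ ω, X ω ∂ℙ) ≤ α ∧
    ((∫ ω, (X ω + lam0) * Real.log (X ω + lam0) ∂ℙ)
        - (∫ ω, (X ω + lam0) ∂ℙ) * (∫ ω, Real.log (X ω + lam0) ∂ℙ)
      = β * (1 - β) * A * Real.log (A / lam0 + 1)) ∧
    (α ≤ A / 2 →
      β * (1 - β) * A * Real.log (A / lam0 + 1)
        = α / A * (A - α) * Real.log (A / lam0 + 1)) ∧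
    (A / 2 ≤ α →
      β * (1 - β) * A * Real.log (A / lam0 + 1) = A / 4 * Real.log (A / lam0 + 1)) := by
  have hβA : β * A = min α (A / 2) := by rw [hβ]; field_simp
  have hβ0 : 0 ≤ β := by rw [hβ]; positivity
  have hβ1 : 0 ≤ 1 - β := by
    have := min_le_right α (A / 2)
    nlinarith
  have hPA' : (ℙ : Measure Ω).real {ω | X ω = A} = β := by simp [Measure.real, hPA, hβ0]
  have hX2 : ∀ᵐ ω ∂ℙ, X ω = A ∨ X ω = 0 :=
    ae_eq_or_eq_of_measure_add_eq_one hX hA.ne'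
      (by rw [hPA, hP0, ← ENNReal.ofReal_add hβ0 hβ1]; simp)
  refine ⟨?_, ?_, ?_, fun h => ?_, fun h => ?_⟩
  · filter_upwards [hX2] with ω hω
    rcases hω with h | h <;> simp [h, hA.le]
  · have hmean := integral_comp_of_ae_eq_or_eq hX hA.ne' hX2 id
    simp only [id, hPA', smul_eq_mul, mul_zero, add_zero] at hmean
    linarith [min_le_left α (A / 2)]
  · have hlog : Real.log (A + lam0) - Real.log lam0 = Real.log (A / lam0 + 1) := by
      rw [← Real.log_div (by positivity) hlam0.ne']
      field_simp
    rw [integral_mul_sub_integral_mul_integral_of_ae_eq_or_eq hX hA.ne' hX2 (· + lam0)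
      (fun x => Real.log (x + lam0)), hPA', zero_add, ← hlog]
    ring
  · rw [hβ, min_eq_left h]
    field_simp
  · rw [hβ, min_eq_right h]
    field_simp
    ring

/-- Let `β = min(α, A/2)/A` and let `X` be the two-point random variable with
`P(X = A) = β`, `P(X = 0) = 1 - β`. Then `0 ≤ X ≤ A` a.s., `E[X] ≤ α`, and
`Cov(X + λ₀, log (X + λ₀)) = β(1-β) A log (A/λ₀ + 1)`; in particular this value equals
`(α/A)(A-α) log (A/λ₀ + 1)` when `α ≤ A/2` and `(A/4) log (A/λ₀ + 1)` when `α ≥ A/2`,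
so the bounds of the preceding inequality are attained. -/
theorem stmt_7 {Ω : Type*} [MeasureSpace Ω] [IsProbabilityMeasure (ℙ : Measure Ω)]
    (lam0 A α : ℝ) (hlam0 : 0 < lam0) (hA : 0 < A) (hα : 0 < α) (hαA : α ≤ A)
    (β : ℝ) (hβ : β = min α (A / 2) / A)
    (X : Ω → ℝ) (hX : Measurable X)
    (hPA : ℙ {ω | X ω = A} = ENNReal.ofReal β)
    (hP0 : ℙ {ω | X ω = 0} = ENNReal.ofReal (1 - β)) :
    (∀ᵐ ω ∂ℙ, 0 ≤ X ω ∧ X ω ≤ A) ∧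
    (∫ ω, X ω ∂ℙ) ≤ α ∧
    ((∫ ω, (X ω + lam0) * Real.log (X ω + lam0) ∂ℙ)
        - (∫ ω, (X ω + lam0) ∂ℙ) * (∫ ω, Real.log (X ω + lam0) ∂ℙ)
      = β * (1 - β) * A * Real.log (A / lam0 + 1)) ∧
    (α ≤ A / 2 →
      β * (1 - β) * A * Real.log (A / lam0 + 1)
        = α / A * (A - α) * Real.log (A / lam0 + 1)) ∧
    (A / 2 ≤ α →
      β * (1 - β) * A * Real.log (A / lam0 + 1) = A / 4 * Real.log (A / lam0 + 1)) :=
  stmt_7_general lam0 A α hlam0 hA hα β hβ X hX hPA hP0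
end

section
/- Let λ₀ > 0, A > 0, and 0 < α ≤ A. Let μ be a probability measure on ℝ supported on [0, A] with ∫ x dμ(x) ≤ α, let X have law μ, and let Y be a random variable that, conditionally on X = x, is Poisson distributed with parameter x + λ₀. Then the mutual information I(X; Y), defined as the KL divergence of the joint law of (X, Y) from the product of its marginal laws, satisfies: I(X; Y) ≤ (α/A)(A − α)·log(A/λ₀ + 1) if α ≤ A/2, and I(X; Y) ≤ (A/4)·log(A/λ₀ + 1) if α ≥ A/2. -/
/-!
Write `p_x(n)` for the Poisson weights with parameter `x + λ₀` and `q(n) = ∫ p_x(n) dμ(x)` for the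
law of `Y`. Jensen's inequality for `log` gives `log q(n) ≥ ∫ log p_x(n) dμ(x)`, and
`log p_x(n) = -(x + λ₀) + n log (x + λ₀) - log n!` is affine in `n`; integrating the resulting bound
on `log (p_x(n) / q(n))` against the joint law yields `I(X;Y) ≤ Cov(X, log (X + λ₀))`.
On `[0, A]` the function `log (x + λ₀)` ranges over an interval of length `L = log (A/λ₀ + 1)`, so
`(x - m) log (x + λ₀)` lies below a centred term plus the chord `L (A - m) x / A`, where `m = E X`;
hence the covariance is at most `L m (A - m) / A`, and both cases follow from elementary bounds on
`m (A - m)`.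
-/

open MeasureTheory
open scoped ENNReal Classical

noncomputable def poissonMeasure (r : ℝ) : Measure ℕ :=
  Measure.sum fun n =>
    (ENNReal.ofReal (Real.exp (-r) * r ^ n / (Nat.factorial n))) • Measure.dirac n

/-- The joint law on `ℝ × ℕ` of `(X, Y)` where `X ~ μ` and, conditionally on `X = x`,
`Y ~ Poisson(x + λ₀)`. -/
noncomputable def poissonJoint (lam0 : ℝ) (μ : Measure ℝ) : Measure (ℝ × ℕ) :=
  μ.bind fun x => (poissonMeasure (x + lam0)).map fun n => (x, n)

/-- The Kullback–Leibler divergence `D(P‖Q) = ∫ log (dP/dQ) dP` when `P ≪ Q`, `+∞` otherwise. -/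
noncomputable def klDivM {α : Type*} [MeasurableSpace α] (P Q : Measure α) : ℝ≥0∞ :=
  if P ≪ Q then ENNReal.ofReal (∫ x, Real.log ((P.rnDeriv Q x).toReal) ∂P) else ⊤

open Real Set
open scoped NNReal Nat ProbabilityTheory
open ProbabilityTheory (Kernel IsMarkovKernel IsFiniteKernel)

namespace ProbabilityTheory

lemma hasSum_mul_natCast_poissonMeasure (r : ℝ≥0) :
    HasSum (fun n : ℕ => exp (-r) * r ^ n / n ! * n) r := by
  have h := (hasSum_one_poissonMeasure r).mul_left (r : ℝ)
  rw [mul_one] at h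
  refine (hasSum_nat_add_iff' 1).mp ?_
  simp only [Finset.sum_range_one, Nat.cast_zero, mul_zero, sub_zero]
  refine h.congr_fun fun n => ?_
  rw [Nat.factorial_succ]
  push_cast
  field_simp
  ring

lemma integrable_natCast_poissonMeasure (r : ℝ≥0) :
    Integrable (fun n : ℕ => (n : ℝ)) Po(r) := by
  simpa [integrable_poissonMeasure_iff] using (hasSum_mul_natCast_poissonMeasure r).summable

lemma integral_natCast_poissonMeasure (r : ℝ≥0) : ∫ n : ℕ, (n : ℝ) ∂Po(r) = r := by
  simpa [integral_poissonMeasure] using (hasSum_mul_natCast_poissonMeasure r).tsum_eq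

lemma measurable_poissonMeasure : Measurable poissonMeasure := by
  refine Measure.measurable_of_measurable_coe _ fun s _ => ?_
  simp only [poissonMeasure, Measure.sum_apply_of_countable, Measure.smul_apply,
    Measure.dirac_apply, smul_eq_mul]
  fun_prop

end ProbabilityTheory

lemma poissonMeasure_eq_poissonMeasure_toNNReal {r : ℝ} (hr : 0 ≤ r) :
    poissonMeasure r = ProbabilityTheory.poissonMeasure r.toNNReal := by
  simp [poissonMeasure, ProbabilityTheory.poissonMeasure, Real.coe_toNNReal _ hr]

noncomputable def poissonChannel (lam0 : ℝ) : Kernel ℝ ℕ where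
  toFun x := Po((x + lam0).toNNReal)
  measurable' := ProbabilityTheory.measurable_poissonMeasure.comp (by fun_prop)

instance (lam0 : ℝ) : IsMarkovKernel (poissonChannel lam0) :=
  ⟨fun _ => inferInstanceAs (IsProbabilityMeasure Po(_))⟩

lemma poissonChannel_apply {lam0 x : ℝ} (hx : 0 ≤ x + lam0) :
    poissonChannel lam0 x = poissonMeasure (x + lam0) :=
  (poissonMeasure_eq_poissonMeasure_toNNReal hx).symm

lemma poissonChannel_real_singleton {lam0 x : ℝ} (hx : 0 ≤ x + lam0) (n : ℕ) :
    (poissonChannel lam0 x).real {n} = exp (-(x + lam0)) * (x + lam0) ^ n / n ! := by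
  simp [poissonChannel, ProbabilityTheory.poissonMeasure_real_singleton, Real.coe_toNNReal _ hx]

lemma poissonJoint_eq_compProd {lam0 : ℝ} {μ : Measure ℝ} [SFinite μ]
    (hμ : ∀ᵐ x ∂μ, 0 ≤ x + lam0) : poissonJoint lam0 μ = μ ⊗ₘ poissonChannel lam0 := by
  rw [Measure.compProd_eq_comp_prod, poissonJoint]
  refine Measure.bind_congr_right ?_
  filter_upwards [hμ] with x hx
  rw [Kernel.prod_apply, Kernel.id_apply, Measure.dirac_prod, poissonChannel_apply hx]

section KernelComp

variable {α β : Type*} [MeasurableSpace α] [MeasurableSpace β] {μ : Measure α} {κ : Kernel α β}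

lemma integrable_kernel_real_apply [IsFiniteMeasure μ] [IsFiniteKernel κ] {s : Set β}
    (hs : MeasurableSet s) : Integrable (fun x => (κ x).real s) μ :=
  integrable_toReal_of_lintegral_ne_top (κ.measurable_coe hs).aemeasurable <| by
    rw [← Measure.bind_apply hs κ.aemeasurable]
    exact measure_ne_top _ _

lemma comp_real_apply [IsFiniteKernel κ] {s : Set β} (hs : MeasurableSet s) :
    (κ ∘ₘ μ).real s = ∫ x, (κ x).real s ∂μ := by
  rw [measureReal_def, Measure.bind_apply hs κ.aemeasurable,
    ← integral_toReal (κ.measurable_coe hs).aemeasurable (ae_of_all _ fun _ => measure_lt_top _ _)]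
  rfl

variable [MeasurableSingletonClass β]

lemma comp_apply_singleton_ne_zero [NeZero μ] {b : β} (h : ∀ᵐ x ∂μ, κ x {b} ≠ 0) :
    (κ ∘ₘ μ) {b} ≠ 0 := by
  rw [Measure.bind_apply (measurableSet_singleton b) κ.aemeasurable]
  intro h0
  obtain ⟨x, hx0, hx⟩ :=
    (((lintegral_eq_zero_iff (κ.measurable_coe (measurableSet_singleton b))).1 h0).and h).exists
  exact hx hx0

variable [Countable β]

lemma measurable_kernel_apply_singleton_div (κ : Kernel α β) (ν : Measure β) :
    Measurable fun z : α × β => κ z.1 {z.2} / ν {z.2} :=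
  measurable_from_prod_countable_left fun b =>
    Measurable.div_const (κ.measurable_coe (measurableSet_singleton b)) (ν {b})

lemma compProd_eq_withDensity_prod_comp [IsFiniteMeasure μ] [IsFiniteKernel κ]
    (h : ∀ b, (κ ∘ₘ μ) {b} ≠ 0) :
    μ ⊗ₘ κ = (μ.prod (κ ∘ₘ μ)).withDensity fun z => κ z.1 {z.2} / (κ ∘ₘ μ) {z.2} := by
  ext s hs
  rw [Measure.compProd_apply hs, withDensity_apply _ hs, ← lintegral_indicator hs,
    lintegral_prod _ ((measurable_kernel_apply_singleton_div κ _).indicator hs).aemeasurable]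
  refine lintegral_congr fun x => ?_
  rw [← lintegral_indicator_one (measurable_prodMk_left hs), lintegral_countable',
    lintegral_countable']
  refine tsum_congr fun b => ?_
  by_cases hb : (x, b) ∈ s
  · simp [Set.indicator_of_mem hb, Set.indicator_of_mem (show b ∈ Prod.mk x ⁻¹' s from hb),
      ENNReal.div_mul_cancel (h b) (measure_ne_top _ _)]
  · simp [Set.indicator_of_notMem hb, Set.indicator_of_notMem (show b ∉ Prod.mk x ⁻¹' s from hb)]

lemma compProd_absolutelyContinuous_prod_comp [IsFiniteMeasure μ] [IsFiniteKernel κ]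
    (h : ∀ b, (κ ∘ₘ μ) {b} ≠ 0) : μ ⊗ₘ κ ≪ μ.prod (κ ∘ₘ μ) := by
  rw [compProd_eq_withDensity_prod_comp h]
  exact withDensity_absolutelyContinuous _ _

lemma llr_compProd_prod_comp [IsFiniteMeasure μ] [IsFiniteKernel κ]
    (h : ∀ b, (κ ∘ₘ μ) {b} ≠ 0) :
    llr (μ ⊗ₘ κ) (μ.prod (κ ∘ₘ μ))
      =ᵐ[μ ⊗ₘ κ] fun z => log ((κ z.1).real {z.2} / (κ ∘ₘ μ).real {z.2}) := by
  have hd := Measure.rnDeriv_withDensity (μ.prod (κ ∘ₘ μ))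
    (measurable_kernel_apply_singleton_div κ (κ ∘ₘ μ))
  rw [← compProd_eq_withDensity_prod_comp h] at hd
  filter_upwards [(compProd_absolutelyContinuous_prod_comp h).ae_le hd] with z hz
  simp only [llr, hz, ENNReal.toReal_div, measureReal_def]

end KernelComp

lemma klDivM_le_ofReal_integral {α : Type*} [MeasurableSpace α] {P Q : Measure α} {g : α → ℝ}
    (hPQ : P ≪ Q) (hg : Integrable g P) (hle : llr P Q ≤ᵐ[P] g) :
    klDivM P Q ≤ ENNReal.ofReal (∫ x, g x ∂P) := by
  rw [klDivM, if_pos hPQ]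
  by_cases hint : Integrable (llr P Q) P
  · exact ENNReal.ofReal_le_ofReal (integral_mono_ae hint hg hle)
  · simp [← llr_def, integral_undef hint]

lemma integral_log_le_log_integral {α : Type*} [MeasurableSpace α] {μ : Measure α}
    [IsProbabilityMeasure μ] {f : α → ℝ} (hf : Integrable f μ)
    (hlog : Integrable (fun x => log (f x)) μ) (hpos : ∀ᵐ x ∂μ, 0 < f x) :
    ∫ x, log (f x) ∂μ ≤ log (∫ x, f x ∂μ) := by
  have hnonneg : 0 ≤ᵐ[μ] f := hpos.mono fun _ hx => hx.le
  have hint : 0 < ∫ x, f x ∂μ := by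
    refine (integral_nonneg_of_ae hnonneg).lt_of_ne fun h0 => ?_
    obtain ⟨x, hx0, hx⟩ :=
      (((integral_eq_zero_iff_of_nonneg_ae hnonneg hf).1 h0.symm).and hpos).exists
    exact hx.ne' hx0
  set t := ∫ x, f x ∂μ
  -- the tangent line of `log` at `t` lies above its graph
  have htangent : ∀ᵐ x ∂μ, log (f x) ≤ f x / t - 1 + log t := by
    filter_upwards [hpos] with x hx
    have := log_le_sub_one_of_pos (div_pos hx hint)
    rw [log_div hx.ne' hint.ne'] at this
    linarith
  calc ∫ x, log (f x) ∂μ ≤ ∫ x, (f x / t - 1 + log t) ∂μ :=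
        integral_mono_ae hlog (((hf.div_const t).sub (integrable_const 1)).add
          (integrable_const _)) htangent
    _ = log t := by
        rw [integral_add (f := fun x => f x / t - 1) ((hf.div_const t).sub (integrable_const 1))
          (integrable_const _), integral_sub (hf.div_const t) (integrable_const 1), integral_div]
        simp only [integral_const, probReal_univ, one_smul]
        rw [div_self hint.ne', sub_self, zero_add]

lemma integrable_of_continuousOn_Icc {μ : Measure ℝ} [IsFiniteMeasure μ] {a b : ℝ}
    (hμ : ∀ᵐ x ∂μ, x ∈ Icc a b) {f : ℝ → ℝ} (hf : ContinuousOn f (Icc a b)) :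
    Integrable f μ := by
  rw [← Measure.restrict_eq_self_of_ae_mem hμ]
  exact hf.integrableOn_compact isCompact_Icc

lemma integral_sub_integral_eq_zero {α : Type*} [MeasurableSpace α] {μ : Measure α}
    [IsProbabilityMeasure μ] (f : α → ℝ) : ∫ x, (f x - ∫ y, f y ∂μ) ∂μ = 0 := by
  simpa [average_eq_integral] using integral_sub_average μ f

lemma integral_sub_integral_mul_le {μ : Measure ℝ} [IsProbabilityMeasure μ] {A c L : ℝ}
    (hA : 0 < A) (hsupp : ∀ᵐ x ∂μ, x ∈ Icc 0 A) {h : ℝ → ℝ} (hh : ContinuousOn h (Icc 0 A))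
    (hbound : ∀ x ∈ Icc 0 A, h x ∈ Icc c (c + L)) :
    ∫ x, (x - ∫ y, y ∂μ) * h x ∂μ ≤ L / A * ((∫ x, x ∂μ) * (A - ∫ x, x ∂μ)) := by
  set m := ∫ x, x ∂μ
  have hid : Integrable (fun x : ℝ => x) μ := integrable_of_continuousOn_Icc hsupp continuousOn_id
  have hm0 : 0 ≤ m := integral_nonneg_of_ae (hsupp.mono fun x hx => hx.1)
  have hmA : m ≤ A := by
    simpa using integral_mono_ae hid (integrable_const A) (hsupp.mono fun x hx => hx.2)
  have hL : 0 ≤ L := by linarith [(hbound 0 ⟨le_rfl, hA.le⟩).1, (hbound 0 ⟨le_rfl, hA.le⟩).2]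
  -- `x ↦ (x - m)(h x - c)` lies below the chord `x ↦ L (A - m) x / A`
  have hchord : ∀ᵐ x ∂μ, (x - m) * h x ≤ L * (A - m) / A * x + c * (x - m) := by
    filter_upwards [hsupp] with x hx
    obtain ⟨hc, hcL⟩ := hbound x hx
    rw [div_mul_eq_mul_div, ← sub_le_iff_le_add, le_div_iff₀ hA]
    rcases le_total m x with hmx | hxm
    · nlinarith [mul_le_mul_of_nonneg_left (sub_le_iff_le_add'.2 hcL) (sub_nonneg.2 hmx),
        mul_nonneg hm0 (sub_nonneg.2 hx.2)]
    · nlinarith [mul_nonneg (sub_nonneg.2 hxm) (sub_nonneg.2 hc), mul_nonneg (mul_nonneg hL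
        (sub_nonneg.2 hmA)) hx.1]
  calc ∫ x, (x - m) * h x ∂μ ≤ ∫ x, (L * (A - m) / A * x + c * (x - m)) ∂μ :=
        integral_mono_ae (integrable_of_continuousOn_Icc hsupp
          ((continuousOn_id.sub continuousOn_const).mul hh))
          ((hid.const_mul _).add ((hid.sub (integrable_const m)).const_mul c)) hchord
    _ = L / A * (m * (A - m)) := by
        rw [integral_add (f := fun x => L * (A - m) / A * x) (g := fun x => c * (x - m))
          (hid.const_mul _) ((hid.sub (integrable_const m)).const_mul c), integral_const_mul,
          integral_const_mul, integral_sub_integral_eq_zero (fun x => x)]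
        ring

lemma integral_sub_add_mul_sub_integral_eq {α : Type*} [MeasurableSpace α] {μ : Measure α}
    [IsProbabilityMeasure μ] {f g : α → ℝ} (hf : Integrable f μ) (hg : Integrable g μ)
    (hfg : Integrable (fun x => f x * g x) μ) (c : ℝ) :
    ∫ x, ((∫ y, f y ∂μ) - f x) + (f x + c) * (g x - ∫ y, g y ∂μ) ∂μ
      = ∫ x, (f x - ∫ y, f y ∂μ) * g x ∂μ := by
  set m := ∫ y, f y ∂μ
  set cg := ∫ y, g y ∂μ
  have hcentre : ∀ x, (m - f x) + (f x + c) * (g x - cg)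
      = (f x - m) * g x + ((m + c) * (g x - cg) - (1 + cg) * (f x - m)) := fun x => by ring
  have hcov : Integrable (fun x => (f x - m) * g x) μ := by
    simpa only [sub_mul] using hfg.sub' (hg.const_mul m)
  have hgc : Integrable (fun x => (m + c) * (g x - cg)) μ :=
    (hg.sub' (integrable_const cg)).const_mul _
  have hfc : Integrable (fun x => (1 + cg) * (f x - m)) μ :=
    (hf.sub' (integrable_const m)).const_mul _
  simp_rw [hcentre]
  rw [integral_add hcov (hgc.sub' hfc), integral_sub hgc hfc, integral_const_mul,
    integral_const_mul, integral_sub_integral_eq_zero, integral_sub_integral_eq_zero]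
  simp

section PoissonChannel

variable {lam0 A : ℝ} {μ : Measure ℝ}

lemma integrable_natCast_poissonChannel (x : ℝ) :
    Integrable (fun n : ℕ => (n : ℝ)) (poissonChannel lam0 x) :=
  ProbabilityTheory.integrable_natCast_poissonMeasure _

lemma integral_natCast_poissonChannel {x : ℝ} (hx : 0 ≤ x + lam0) :
    ∫ n : ℕ, (n : ℝ) ∂(poissonChannel lam0 x) = x + lam0 := by
  simp [poissonChannel, ProbabilityTheory.integral_natCast_poissonMeasure, Real.coe_toNNReal _ hx]

lemma poissonChannel_apply_singleton_ne_zero {x : ℝ} (hx : 0 < x + lam0) (n : ℕ) :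
    poissonChannel lam0 x {n} ≠ 0 := by
  rw [← measureReal_ne_zero_iff, poissonChannel_real_singleton hx.le]
  positivity

lemma log_poissonChannel_real_singleton {x : ℝ} (hx : 0 < x + lam0) (n : ℕ) :
    log ((poissonChannel lam0 x).real {n}) = -(x + lam0) + n * log (x + lam0) - log n ! := by
  rw [poissonChannel_real_singleton hx.le, log_div (by positivity) (by positivity),
    log_mul (by positivity) (by positivity), log_exp, log_pow]

lemma integrable_compProd_poissonChannel [SFinite μ] {a b : ℝ → ℝ}
    (hμ : ∀ᵐ x ∂μ, 0 ≤ x + lam0) (ha : Measurable a) (hb : Measurable b) (ha' : Integrable a μ)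
    (hb' : Integrable (fun x => (x + lam0) * b x) μ) :
    Integrable (fun z : ℝ × ℕ => a z.1 + z.2 * b z.1) (μ ⊗ₘ poissonChannel lam0) := by
  have hg : Measurable fun z : ℝ × ℕ => a z.1 + z.2 * b z.1 :=
    measurable_from_prod_countable_left fun n => ha.add (hb.const_mul (n : ℝ))
  have hslice : ∀ x, Integrable (fun n : ℕ => a x + n * b x) (poissonChannel lam0 x) :=
    fun x => (integrable_const _).add ((integrable_natCast_poissonChannel x).mul_const _)
  have hslice_abs : ∀ x, Integrable (fun n : ℕ => |a x| + n * |b x|) (poissonChannel lam0 x) :=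
    fun x => (integrable_const _).add ((integrable_natCast_poissonChannel x).mul_const _)
  rw [Measure.integrable_compProd_iff hg.aestronglyMeasurable]
  dsimp only
  refine ⟨ae_of_all _ hslice, Integrable.mono' (ha'.abs.add hb'.abs)
    hg.norm.stronglyMeasurable.integral_kernel_prod_right'.aestronglyMeasurable ?_⟩
  filter_upwards [hμ] with x hx
  rw [Real.norm_of_nonneg (integral_nonneg fun _ => norm_nonneg _)]
  calc ∫ n : ℕ, ‖a x + n * b x‖ ∂(poissonChannel lam0 x)
      ≤ ∫ n : ℕ, (|a x| + n * |b x|) ∂(poissonChannel lam0 x) :=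
        integral_mono (hslice x).norm (hslice_abs x) fun n => by
          simpa [abs_mul] using norm_add_le (a x) (n * b x)
    _ = |a x| + |(x + lam0) * b x| := by
        rw [integral_add (integrable_const _) ((integrable_natCast_poissonChannel x).mul_const _),
          integral_mul_const, integral_natCast_poissonChannel hx, abs_mul, abs_of_nonneg hx]
        simp

lemma integral_compProd_poissonChannel [SFinite μ] {a b : ℝ → ℝ}
    (hμ : ∀ᵐ x ∂μ, 0 ≤ x + lam0) (ha : Measurable a) (hb : Measurable b) (ha' : Integrable a μ)
    (hb' : Integrable (fun x => (x + lam0) * b x) μ) :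
    ∫ z, a z.1 + z.2 * b z.1 ∂(μ ⊗ₘ poissonChannel lam0) = ∫ x, a x + (x + lam0) * b x ∂μ := by
  rw [Measure.integral_compProd (integrable_compProd_poissonChannel hμ ha hb ha' hb')]
  refine integral_congr_ae ?_
  filter_upwards [hμ] with x hx
  rw [integral_add (integrable_const _) ((integrable_natCast_poissonChannel x).mul_const _),
    integral_mul_const, integral_natCast_poissonChannel hx]
  simp

lemma continuousOn_log_add (hlam0 : 0 < lam0) :
    ContinuousOn (fun x => log (x + lam0)) (Icc 0 A) :=
  (continuousOn_id.add continuousOn_const).log fun x hx => by dsimp; linarith [hx.1]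

variable (hlam0 : 0 < lam0) (hsupp : ∀ᵐ x ∂μ, x ∈ Icc 0 A)
include hlam0 hsupp

lemma log_poissonChannel_real_singleton_ae_eq (n : ℕ) :
    (fun x => log ((poissonChannel lam0 x).real {n}))
      =ᵐ[μ] fun x => -(x + lam0) + n * log (x + lam0) - log n ! := by
  filter_upwards [hsupp] with x hx
  exact log_poissonChannel_real_singleton (by linarith [hx.1]) n

variable [IsProbabilityMeasure μ]

lemma integrable_log_add : Integrable (fun x => log (x + lam0)) μ :=
  integrable_of_continuousOn_Icc hsupp (continuousOn_log_add hlam0)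

lemma comp_poissonChannel_apply_singleton_ne_zero (n : ℕ) :
    (poissonChannel lam0 ∘ₘ μ) {n} ≠ 0 :=
  comp_apply_singleton_ne_zero <| by
    filter_upwards [hsupp] with x hx
    exact poissonChannel_apply_singleton_ne_zero (by linarith [hx.1]) n

lemma integrable_log_poissonChannel_real_singleton (n : ℕ) :
    Integrable (fun x => log ((poissonChannel lam0 x).real {n})) μ :=
  (((integrable_of_continuousOn_Icc hsupp continuousOn_id).fun_add
    (integrable_const lam0)).fun_neg.fun_add ((integrable_log_add hlam0 hsupp).const_mul n)).sub'
    (integrable_const _) |>.congr (log_poissonChannel_real_singleton_ae_eq hlam0 hsupp n).symm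

lemma integral_log_poissonChannel_real_singleton (n : ℕ) :
    ∫ x, log ((poissonChannel lam0 x).real {n}) ∂μ
      = -((∫ x, x ∂μ) + lam0) + n * (∫ x, log (x + lam0) ∂μ) - log n ! := by
  have hid : Integrable (fun x : ℝ => x) μ := integrable_of_continuousOn_Icc hsupp continuousOn_id
  have hψ := integrable_log_add hlam0 hsupp
  have hrate : Integrable (fun x => -(x + lam0)) μ := (hid.fun_add (integrable_const lam0)).fun_neg
  rw [integral_congr_ae (log_poissonChannel_real_singleton_ae_eq hlam0 hsupp n),
    integral_sub (hrate.fun_add (hψ.const_mul n)) (integrable_const _),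
    integral_add hrate (hψ.const_mul n), integral_neg, integral_add hid (integrable_const _),
    integral_const_mul]
  simp

lemma integral_log_poissonChannel_real_singleton_le (n : ℕ) :
    ∫ x, log ((poissonChannel lam0 x).real {n}) ∂μ
      ≤ log ((poissonChannel lam0 ∘ₘ μ).real {n}) := by
  rw [comp_real_apply (measurableSet_singleton n)]
  refine integral_log_le_log_integral (integrable_kernel_real_apply (measurableSet_singleton n))
    (integrable_log_poissonChannel_real_singleton hlam0 hsupp n) ?_
  filter_upwards [hsupp] with x hx
  rw [poissonChannel_real_singleton (by linarith [hx.1])]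
  have : 0 < x + lam0 := by linarith [hx.1]
  positivity

lemma llr_compProd_poissonChannel_le :
    ∀ᵐ z ∂(μ ⊗ₘ poissonChannel lam0),
      llr (μ ⊗ₘ poissonChannel lam0) (μ.prod (poissonChannel lam0 ∘ₘ μ)) z
        ≤ ((∫ x, x ∂μ) - z.1) + z.2 * (log (z.1 + lam0) - ∫ x, log (x + lam0) ∂μ) := by
  filter_upwards [llr_compProd_prod_comp (comp_poissonChannel_apply_singleton_ne_zero hlam0 hsupp),
    Measure.ae_compProd_of_ae_fst _ measurableSet_Icc hsupp] with z hz hz1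
  have hrate : 0 < z.1 + lam0 := by linarith [hz1.1]
  have hjoint : 0 < (poissonChannel lam0 z.1).real {z.2} := by
    rw [poissonChannel_real_singleton hrate.le]
    positivity
  have hmarg : 0 < (poissonChannel lam0 ∘ₘ μ).real {z.2} := ENNReal.toReal_pos
    (comp_poissonChannel_apply_singleton_ne_zero hlam0 hsupp z.2) (measure_ne_top _ _)
  rw [hz, log_div hjoint.ne' hmarg.ne', log_poissonChannel_real_singleton hrate]
  linarith [integral_log_poissonChannel_real_singleton_le hlam0 hsupp z.2,
    integral_log_poissonChannel_real_singleton hlam0 hsupp z.2]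

lemma klDivM_poissonJoint_le_integral :
    klDivM (poissonJoint lam0 μ) ((poissonJoint lam0 μ).fst.prod (poissonJoint lam0 μ).snd)
      ≤ ENNReal.ofReal (∫ x, (x - ∫ y, y ∂μ) * log (x + lam0) ∂μ) := by
  have hnonneg : ∀ᵐ x ∂μ, 0 ≤ x + lam0 := hsupp.mono fun x hx => by linarith [hx.1]
  rw [poissonJoint_eq_compProd hnonneg, Measure.fst_compProd, Measure.snd_compProd]
  set m := ∫ x, x ∂μ
  set cb := ∫ x, log (x + lam0) ∂μ
  have hid : Integrable (fun x : ℝ => x) μ := integrable_of_continuousOn_Icc hsupp continuousOn_id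
  have hψ := integrable_log_add hlam0 hsupp
  have hmeas : Measurable fun x => log (x + lam0) - cb := by fun_prop
  have hint : Integrable (fun x => (x + lam0) * (log (x + lam0) - cb)) μ :=
    integrable_of_continuousOn_Icc hsupp <| (continuousOn_id.add continuousOn_const).mul
      ((continuousOn_log_add hlam0).sub continuousOn_const)
  calc _ ≤ ENNReal.ofReal (∫ z, (m - z.1) + z.2 * (log (z.1 + lam0) - cb)
        ∂(μ ⊗ₘ poissonChannel lam0)) :=
        klDivM_le_ofReal_integral
          (compProd_absolutelyContinuous_prod_comp
            (comp_poissonChannel_apply_singleton_ne_zero hlam0 hsupp))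
          (integrable_compProd_poissonChannel hnonneg (by fun_prop) hmeas
            ((integrable_const m).sub' hid) hint)
          (llr_compProd_poissonChannel_le hlam0 hsupp)
    _ = ENNReal.ofReal (∫ x, (x - m) * log (x + lam0) ∂μ) := by
        rw [integral_compProd_poissonChannel hnonneg (by fun_prop) hmeas
          ((integrable_const m).sub' hid) hint,
          integral_sub_add_mul_sub_integral_eq hid hψ (integrable_of_continuousOn_Icc hsupp
            (continuousOn_id.mul (continuousOn_log_add hlam0)))]

lemma klDivM_poissonJoint_le (hA : 0 < A) :
    klDivM (poissonJoint lam0 μ) ((poissonJoint lam0 μ).fst.prod (poissonJoint lam0 μ).snd)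
      ≤ ENNReal.ofReal (log (A / lam0 + 1) / A * ((∫ x, x ∂μ) * (A - ∫ x, x ∂μ))) := by
  refine (klDivM_poissonJoint_le_integral hlam0 hsupp).trans (ENNReal.ofReal_le_ofReal ?_)
  refine integral_sub_integral_mul_le (c := log lam0) hA hsupp (continuousOn_log_add hlam0)
    fun x hx => ⟨log_le_log hlam0 (by linarith [hx.1]), ?_⟩
  rw [← log_mul hlam0.ne' (by positivity), mul_add, mul_div_cancel₀ _ hlam0.ne', mul_one,
    add_comm]
  exact log_le_log (by linarith [hx.1]) (by linarith [hx.2])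

end PoissonChannel

theorem stmt_8_general (lam0 A α : ℝ) (hlam0 : 0 < lam0) (hA : 0 < A)
    (μ : Measure ℝ) [IsProbabilityMeasure μ]
    (hsupp : ∀ᵐ x ∂μ, x ∈ Set.Icc 0 A)
    (hmean : ∫ x, x ∂μ ≤ α) :
    (α ≤ A / 2 →
      klDivM (poissonJoint lam0 μ)
          (((poissonJoint lam0 μ).fst).prod ((poissonJoint lam0 μ).snd))
        ≤ ENNReal.ofReal (α / A * (A - α) * Real.log (A / lam0 + 1))) ∧
    (A / 2 ≤ α →
      klDivM (poissonJoint lam0 μ)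
          (((poissonJoint lam0 μ).fst).prod ((poissonJoint lam0 μ).snd))
        ≤ ENNReal.ofReal (A / 4 * Real.log (A / lam0 + 1))) := by
  have hbound := klDivM_poissonJoint_le hlam0 hsupp hA
  have hm : 0 ≤ ∫ x, x ∂μ := integral_nonneg_of_ae (hsupp.mono fun x hx => hx.1)
  have hL : 0 ≤ log (A / lam0 + 1) / A :=
    div_nonneg (log_nonneg (by linarith [div_pos hA hlam0])) hA.le
  refine ⟨fun hα => hbound.trans (ENNReal.ofReal_le_ofReal ?_),
    fun _ => hbound.trans (ENNReal.ofReal_le_ofReal ?_)⟩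
  · calc _ ≤ log (A / lam0 + 1) / A * (α * (A - α)) :=
          mul_le_mul_of_nonneg_left (by nlinarith) hL
      _ = _ := by ring
  · calc _ ≤ log (A / lam0 + 1) / A * (A * A / 4) :=
          mul_le_mul_of_nonneg_left (by nlinarith [sq_nonneg (A - 2 * ∫ x, x ∂μ)]) hL
      _ = _ := by field_simp

/-- For the Poisson channel `Y ~ Poisson(X + λ₀)` with input law `μ` supported
on `[0, A]` and mean at most `α`, the mutual information `I(X;Y)`, i.e. the KL divergence of the
joint law from the product of its marginals, satisfies
`I(X;Y) ≤ (α/A)(A-α) log (A/λ₀ + 1)` if `α ≤ A/2`, and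
`I(X;Y) ≤ (A/4) log (A/λ₀ + 1)` if `α ≥ A/2`. -/
theorem stmt_8 (lam0 A α : ℝ) (hlam0 : 0 < lam0) (hA : 0 < A) (hα : 0 < α) (hαA : α ≤ A)
    (μ : Measure ℝ) [IsProbabilityMeasure μ]
    (hsupp : ∀ᵐ x ∂μ, x ∈ Set.Icc 0 A)
    (hmean : ∫ x, x ∂μ ≤ α) :
    (α ≤ A / 2 →
      klDivM (poissonJoint lam0 μ)
          (((poissonJoint lam0 μ).fst).prod ((poissonJoint lam0 μ).snd))
        ≤ ENNReal.ofReal (α / A * (A - α) * Real.log (A / lam0 + 1))) ∧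
    (A / 2 ≤ α →
      klDivM (poissonJoint lam0 μ)
          (((poissonJoint lam0 μ).fst).prod ((poissonJoint lam0 μ).snd))
        ≤ ENNReal.ofReal (A / 4 * Real.log (A / lam0 + 1))) :=
  stmt_8_general lam0 A α hlam0 hA μ hsupp hmean
end

section
/- Let 𝒳₁, 𝒴₁, 𝒳₂, 𝒴₂ be finite sets, W₁ a strictly positive channel from 𝒳₁ to 𝒴₁, and W₂ a strictly positive channel from 𝒳₂ to 𝒴₂. For a channel W from 𝒳 to 𝒴 define A(W) to be the maximum over input pmfs p_X on 𝒳 of Σ_{x,y} [p_X(x)W(y|x) − p_X(x)·p_Y(y)]·log W(y|x), where p_Y(y) = Σ_x p_X(x)W(y|x). Let W₁ ⊗ W₂ be the product channel from 𝒳₁ × 𝒳₂ to 𝒴₁ × 𝒴₂ given by (W₁ ⊗ W₂)((y₁,y₂)|(x₁,x₂)) = W₁(y₁|x₁)·W₂(y₂|x₂), where the maximum defining A(W₁ ⊗ W₂) is over all joint input pmfs on 𝒳₁ × 𝒳₂ (not only product pmfs). Then A(W₁ ⊗ W₂) = A(W₁) + A(W₂), and the maximum for the product channel is attained at a product input pmf.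 -/
/-!
For a product channel, `log (W₁ ⊗ W₂) = log W₁ + log W₂`, and the functional
`f ↦ ∑ (P_XY - P_X ⊗ P_Y) f` is linear in `f`. A test function depending only on the first
coordinates sees only the first marginals of the joint input and output laws, so
`symKL p (W₁ ⊗ W₂) = symKL p₁ W₁ + symKL p₂ W₂` with `p₁, p₂` the marginals of `p`.
Hence every joint input is dominated by the product of maximizers for `W₁` and `W₂`, which
themselves exist by compactness of the simplex.
-/

open scoped BigOperators

/-- A probability mass function on a finite set. -/
def IsPmf {S : Type*} [Fintype S] (p : S → ℝ) : Prop :=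
  (∀ s, 0 ≤ p s) ∧ (∀ s, p s ≤ 1) ∧ ∑ s, p s = 1

/-- The symmetrized KL divergence between the joint pmf `pX(x) W(y|x)` and the product of its
marginals, in its simplified form `∑ (x,y), (p(x,y) - pX x * pY y) * log (W x y)`. -/
noncomputable def symKL {X Y : Type*} [Fintype X] [Fintype Y]
    (pX : X → ℝ) (W : X → Y → ℝ) : ℝ :=
  ∑ x, ∑ y, (pX x * W x y - pX x * (∑ x', pX x' * W x' y)) * Real.log (W x y)

/-- `Abound W` is the maximum over input pmfs of the symmetrized KL divergence between the joint
pmf and the product of its marginals. -/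
noncomputable def Abound {X Y : Type*} [Fintype X] [Fintype Y] (W : X → Y → ℝ) : ℝ :=
  sSup {a | ∃ p, IsPmf p ∧ a = symKL p W}

open Finset

section Simplex

variable {X Y : Type*} [Fintype X] [Fintype Y]

lemma isPmf_iff_mem_stdSimplex {p : X → ℝ} : IsPmf p ↔ p ∈ stdSimplex ℝ X :=
  ⟨fun hp => ⟨hp.1, hp.2.2⟩,
    fun hp => ⟨hp.1, fun x => (mem_Icc_of_mem_stdSimplex hp x).2, hp.2⟩⟩

lemma continuous_symKL (W : X → Y → ℝ) : Continuous fun p : X → ℝ => symKL p W := by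
  unfold symKL
  fun_prop

lemma exists_isPmf_forall_symKL_le [Nonempty X] (W : X → Y → ℝ) :
    ∃ p, IsPmf p ∧ ∀ q, IsPmf q → symKL q W ≤ symKL p W := by
  classical
  obtain ⟨p, hp, hmax⟩ := (isCompact_stdSimplex ℝ X).exists_isMaxOn
    ⟨_, single_mem_stdSimplex ℝ (Classical.arbitrary X)⟩ (continuous_symKL W).continuousOn
  exact ⟨p, isPmf_iff_mem_stdSimplex.2 hp, fun q hq => hmax (isPmf_iff_mem_stdSimplex.1 hq)⟩

lemma Abound_eq_symKL_of_forall_le {W : X → Y → ℝ} {p : X → ℝ} (hp : IsPmf p)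
    (hmax : ∀ q, IsPmf q → symKL q W ≤ symKL p W) : Abound W = symKL p W :=
  IsGreatest.csSup_eq ⟨⟨p, hp, rfl⟩, by rintro _ ⟨q, hq, rfl⟩; exact hmax q hq⟩

end Simplex

section Functional

variable {X Y : Type*} [Fintype X]

def outputDist (p : X → ℝ) (W : X → Y → ℝ) (y : Y) : ℝ :=
  ∑ x, p x * W x y

variable [Fintype Y]

/-- `∑ (P_XY - P_X ⊗ P_Y) f` for the joint law `P_XY(x, y) = p x * W x y`. -/
def jointProdDiff (p : X → ℝ) (W : X → Y → ℝ) (f : X → Y → ℝ) : ℝ :=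
  ∑ x, ∑ y, (p x * W x y - p x * outputDist p W y) * f x y

lemma symKL_eq_jointProdDiff (p : X → ℝ) (W : X → Y → ℝ) :
    symKL p W = jointProdDiff p W fun x y => Real.log (W x y) := rfl

lemma jointProdDiff_add (p : X → ℝ) (W f g : X → Y → ℝ) :
    jointProdDiff p W (f + g) = jointProdDiff p W f + jointProdDiff p W g := by
  simp only [jointProdDiff, Pi.add_apply, mul_add, sum_add_distrib]

lemma jointProdDiff_eq_sum_mul (p : X → ℝ) (W f : X → Y → ℝ) :
    jointProdDiff p W f = ∑ x, p x * ∑ y, (W x y - outputDist p W y) * f x y := by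
  simp only [jointProdDiff, mul_sum, ← mul_sub, mul_assoc]

end Functional

section Product

variable {X₁ X₂ Y₁ Y₂ : Type*}

def marginalFst [Fintype X₂] (p : X₁ × X₂ → ℝ) (x₁ : X₁) : ℝ := ∑ x₂, p (x₁, x₂)

def marginalSnd [Fintype X₁] (p : X₁ × X₂ → ℝ) (x₂ : X₂) : ℝ := ∑ x₁, p (x₁, x₂)

def prodChannel (W₁ : X₁ → Y₁ → ℝ) (W₂ : X₂ → Y₂ → ℝ) (x : X₁ × X₂) (y : Y₁ × Y₂) : ℝ :=
  W₁ x.1 y.1 * W₂ x.2 y.2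

section Pmf

variable [Fintype X₁] [Fintype X₂]

lemma IsPmf.marginalFst {p : X₁ × X₂ → ℝ} (hp : IsPmf p) : IsPmf (marginalFst p) := by
  rw [isPmf_iff_mem_stdSimplex] at hp ⊢
  refine ⟨fun x₁ => sum_nonneg fun x₂ _ => hp.1 _, ?_⟩
  rw [← hp.2, Fintype.sum_prod_type]
  rfl

lemma IsPmf.marginalSnd {p : X₁ × X₂ → ℝ} (hp : IsPmf p) : IsPmf (marginalSnd p) := by
  rw [isPmf_iff_mem_stdSimplex] at hp ⊢
  refine ⟨fun x₂ => sum_nonneg fun x₁ _ => hp.1 _, ?_⟩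
  rw [← hp.2, Fintype.sum_prod_type_right]
  rfl

lemma IsPmf.mul {p₁ : X₁ → ℝ} {p₂ : X₂ → ℝ} (hp₁ : IsPmf p₁) (hp₂ : IsPmf p₂) :
    IsPmf fun x : X₁ × X₂ => p₁ x.1 * p₂ x.2 := by
  rw [isPmf_iff_mem_stdSimplex] at hp₁ hp₂ ⊢
  refine ⟨fun x => mul_nonneg (hp₁.1 _) (hp₂.1 _), ?_⟩
  simp only [Fintype.sum_prod_type, ← mul_sum, hp₂.2, mul_one, hp₁.2]

end Pmf

lemma marginalFst_mul [Fintype X₂] (p₁ : X₁ → ℝ) {p₂ : X₂ → ℝ} (hp₂ : ∑ x₂, p₂ x₂ = 1) :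
    marginalFst (fun x : X₁ × X₂ => p₁ x.1 * p₂ x.2) = p₁ := by
  ext x₁
  simp only [marginalFst, ← mul_sum, hp₂, mul_one]

lemma marginalSnd_mul [Fintype X₁] {p₁ : X₁ → ℝ} (hp₁ : ∑ x₁, p₁ x₁ = 1) (p₂ : X₂ → ℝ) :
    marginalSnd (fun x : X₁ × X₂ => p₁ x.1 * p₂ x.2) = p₂ := by
  ext x₂
  simp only [marginalSnd, ← sum_mul, hp₁, one_mul]

section Channel

variable [Fintype X₁] [Fintype X₂] {W₁ : X₁ → Y₁ → ℝ} {W₂ : X₂ → Y₂ → ℝ}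

lemma sum_outputDist_prodChannel_snd [Fintype Y₂] (hW₂ : ∀ x, ∑ y, W₂ x y = 1)
    (p : X₁ × X₂ → ℝ) (y₁ : Y₁) :
    ∑ y₂, outputDist p (prodChannel W₁ W₂) (y₁, y₂) = outputDist (marginalFst p) W₁ y₁ := by
  simp only [outputDist, prodChannel, marginalFst]
  rw [sum_comm]
  simp only [← mul_sum, hW₂, mul_one, Fintype.sum_prod_type, sum_mul]

lemma sum_outputDist_prodChannel_fst [Fintype Y₁] (hW₁ : ∀ x, ∑ y, W₁ x y = 1)
    (p : X₁ × X₂ → ℝ) (y₂ : Y₂) :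
    ∑ y₁, outputDist p (prodChannel W₁ W₂) (y₁, y₂) = outputDist (marginalSnd p) W₂ y₂ := by
  simp only [outputDist, prodChannel, marginalSnd]
  rw [sum_comm]
  simp only [mul_comm (W₁ _ _), ← mul_assoc, ← mul_sum, ← sum_mul, hW₁, mul_one,
    Fintype.sum_prod_type_right]

variable [Fintype Y₁] [Fintype Y₂]

lemma jointProdDiff_prodChannel_comp_fst (hW₂ : ∀ x, ∑ y, W₂ x y = 1) (p : X₁ × X₂ → ℝ)
    (g : X₁ → Y₁ → ℝ) :
    jointProdDiff p (prodChannel W₁ W₂) (fun x y => g x.1 y.1)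
      = jointProdDiff (marginalFst p) W₁ g := by
  have inner (x : X₁ × X₂) :
      ∑ y : Y₁ × Y₂, (prodChannel W₁ W₂ x y - outputDist p (prodChannel W₁ W₂) y) * g x.1 y.1
        = ∑ y₁, (W₁ x.1 y₁ - outputDist (marginalFst p) W₁ y₁) * g x.1 y₁ := by
    simp only [Fintype.sum_prod_type, ← sum_mul, sum_sub_distrib, prodChannel, ← mul_sum, hW₂,
      mul_one, sum_outputDist_prodChannel_snd hW₂]
  simp only [jointProdDiff_eq_sum_mul, inner, Fintype.sum_prod_type, marginalFst, sum_mul]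

lemma jointProdDiff_prodChannel_comp_snd (hW₁ : ∀ x, ∑ y, W₁ x y = 1) (p : X₁ × X₂ → ℝ)
    (g : X₂ → Y₂ → ℝ) :
    jointProdDiff p (prodChannel W₁ W₂) (fun x y => g x.2 y.2)
      = jointProdDiff (marginalSnd p) W₂ g := by
  have inner (x : X₁ × X₂) :
      ∑ y : Y₁ × Y₂, (prodChannel W₁ W₂ x y - outputDist p (prodChannel W₁ W₂) y) * g x.2 y.2
        = ∑ y₂, (W₂ x.2 y₂ - outputDist (marginalSnd p) W₂ y₂) * g x.2 y₂ := by
    simp only [Fintype.sum_prod_type_right, ← sum_mul, sum_sub_distrib, prodChannel, ← sum_mul,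
      hW₁, one_mul, sum_outputDist_prodChannel_fst hW₁]
  simp only [jointProdDiff_eq_sum_mul, inner, Fintype.sum_prod_type_right, marginalSnd, sum_mul]

lemma symKL_prodChannel (hW₁pos : ∀ x y, 0 < W₁ x y) (hW₁ : ∀ x, ∑ y, W₁ x y = 1)
    (hW₂pos : ∀ x y, 0 < W₂ x y) (hW₂ : ∀ x, ∑ y, W₂ x y = 1) (p : X₁ × X₂ → ℝ) :
    symKL p (prodChannel W₁ W₂) = symKL (marginalFst p) W₁ + symKL (marginalSnd p) W₂ := by
  have log_prod : (fun x y => Real.log (prodChannel W₁ W₂ x y))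
      = (fun (x : X₁ × X₂) (y : Y₁ × Y₂) => Real.log (W₁ x.1 y.1))
        + fun x y => Real.log (W₂ x.2 y.2) := by
    ext x y
    exact Real.log_mul (hW₁pos _ _).ne' (hW₂pos _ _).ne'
  rw [symKL_eq_jointProdDiff, log_prod, jointProdDiff_add,
    jointProdDiff_prodChannel_comp_fst hW₂ p fun x y => Real.log (W₁ x y),
    jointProdDiff_prodChannel_comp_snd hW₁ p fun x y => Real.log (W₂ x y)]
  rfl

end Channel

end Product

theorem stmt_10_general {𝒳₁ 𝒴₁ 𝒳₂ 𝒴₂ : Type*}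
    [Fintype 𝒳₁] [Fintype 𝒴₁] [Fintype 𝒳₂] [Fintype 𝒴₂]
    [Nonempty 𝒳₁] [Nonempty 𝒳₂]
    (W₁ : 𝒳₁ → 𝒴₁ → ℝ) (W₂ : 𝒳₂ → 𝒴₂ → ℝ)
    (hW₁pos : ∀ x y, 0 < W₁ x y) (hW₁sum : ∀ x, ∑ y, W₁ x y = 1)
    (hW₂pos : ∀ x y, 0 < W₂ x y) (hW₂sum : ∀ x, ∑ y, W₂ x y = 1) :
    Abound (fun (x : 𝒳₁ × 𝒳₂) (y : 𝒴₁ × 𝒴₂) => W₁ x.1 y.1 * W₂ x.2 y.2)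
        = Abound W₁ + Abound W₂ ∧
      ∃ p₁ : 𝒳₁ → ℝ, ∃ p₂ : 𝒳₂ → ℝ, IsPmf p₁ ∧ IsPmf p₂ ∧
        symKL (fun x : 𝒳₁ × 𝒳₂ => p₁ x.1 * p₂ x.2)
            (fun (x : 𝒳₁ × 𝒳₂) (y : 𝒴₁ × 𝒴₂) => W₁ x.1 y.1 * W₂ x.2 y.2)
          = Abound (fun (x : 𝒳₁ × 𝒳₂) (y : 𝒴₁ × 𝒴₂) => W₁ x.1 y.1 * W₂ x.2 y.2) := by
  obtain ⟨q₁, hq₁, hmax₁⟩ := exists_isPmf_forall_symKL_le W₁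
  obtain ⟨q₂, hq₂, hmax₂⟩ := exists_isPmf_forall_symKL_le W₂
  have symKL_prod := symKL_prodChannel hW₁pos hW₁sum hW₂pos hW₂sum
  have hq : symKL (fun x : 𝒳₁ × 𝒳₂ => q₁ x.1 * q₂ x.2) (prodChannel W₁ W₂)
      = symKL q₁ W₁ + symKL q₂ W₂ := by
    rw [symKL_prod, marginalFst_mul q₁ hq₂.2.2, marginalSnd_mul hq₁.2.2 q₂]
  have hA : Abound (prodChannel W₁ W₂)
      = symKL (fun x : 𝒳₁ × 𝒳₂ => q₁ x.1 * q₂ x.2) (prodChannel W₁ W₂) := by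
    refine Abound_eq_symKL_of_forall_le (hq₁.mul hq₂) fun p hp => ?_
    rw [hq, symKL_prod]
    exact add_le_add (hmax₁ _ hp.marginalFst) (hmax₂ _ hp.marginalSnd)
  refine ⟨?_, q₁, q₂, hq₁, hq₂, hA.symm⟩
  change Abound (prodChannel W₁ W₂) = _
  rw [hA, hq, Abound_eq_symKL_of_forall_le hq₁ hmax₁, Abound_eq_symKL_of_forall_le hq₂ hmax₂]

/-- For strictly positive channels `W₁` and `W₂`, the symmetrized-KL upper
bound is additive over the product channel, `A(W₁ ⊗ W₂) = A(W₁) + A(W₂)` (where the maximum for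
the product channel is over all joint input pmfs), and the maximum for the product channel is
attained at a product input pmf. -/
theorem stmt_10 {𝒳₁ 𝒴₁ 𝒳₂ 𝒴₂ : Type*}
    [Fintype 𝒳₁] [Fintype 𝒴₁] [Fintype 𝒳₂] [Fintype 𝒴₂]
    [Nonempty 𝒳₁] [Nonempty 𝒳₂]
    (W₁ : 𝒳₁ → 𝒴₁ → ℝ) (W₂ : 𝒳₂ → 𝒴₂ → ℝ)
    (hW₁pos : ∀ x y, 0 < W₁ x y) (hW₁le : ∀ x y, W₁ x y ≤ 1) (hW₁sum : ∀ x, ∑ y, W₁ x y = 1)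
    (hW₂pos : ∀ x y, 0 < W₂ x y) (hW₂le : ∀ x y, W₂ x y ≤ 1) (hW₂sum : ∀ x, ∑ y, W₂ x y = 1) :
    Abound (fun (x : 𝒳₁ × 𝒳₂) (y : 𝒴₁ × 𝒴₂) => W₁ x.1 y.1 * W₂ x.2 y.2)
        = Abound W₁ + Abound W₂ ∧
      ∃ p₁ : 𝒳₁ → ℝ, ∃ p₂ : 𝒳₂ → ℝ, IsPmf p₁ ∧ IsPmf p₂ ∧
        symKL (fun x : 𝒳₁ × 𝒳₂ => p₁ x.1 * p₂ x.2)
            (fun (x : 𝒳₁ × 𝒳₂) (y : 𝒴₁ × 𝒴₂) => W₁ x.1 y.1 * W₂ x.2 y.2)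
          = Abound (fun (x : 𝒳₁ × 𝒳₂) (y : 𝒴₁ × 𝒴₂) => W₁ x.1 y.1 * W₂ x.2 y.2) :=
  stmt_10_general W₁ W₂ hW₁pos hW₁sum hW₂pos hW₂sum
end

section
/- Let 𝒳 and 𝒴 be finite sets and p_X a fixed input pmf on 𝒳. For a strictly positive channel W from 𝒳 to 𝒴, let F(W) = D_sym(p ‖ p_X ⊗ p_Y), the symmetrized KL divergence between the joint pmf p(x,y) = p_X(x)W(y|x) and the product of its marginals. Then F is convex in the channel: for strictly positive channels W₀, W₁ and t ∈ [0,1], F(t·W₁ + (1−t)·W₀) ≤ t·F(W₁) + (1−t)·F(W₀), where (t·W₁ + (1−t)·W₀)(y|x) = t·W₁(y|x) + (1−t)·W₀(y|x). -/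
/-!
Both arguments of `D_sym(p ‖ pX ⊗ pY)` are linear in the channel: `p(x,y) = pX x * W x y` and
`pX x * pY y = pX x * ∑ x', pX x' * W x' y`. The summand `(a, b) ↦ a log (a/b) + b log (b/a)` is
jointly convex on the positive quadrant, being the sum of the perspective of `u ↦ u log u` and its
swap. Summands with `pX x = 0` vanish identically; for the others both arguments are positive
whenever the channel is, so `F` is a sum of convex functions composed with linear maps.
-/

open scoped BigOperators

/-- For a fixed input pmf `pX` and channel `W`, the symmetrized KL divergence
`D_sym(p ‖ pX ⊗ pY) = D(p ‖ pX ⊗ pY) + D(pX ⊗ pY ‖ p)` between the joint pmf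
`p(x,y) = pX x * W x y` and the product of its marginals. -/
noncomputable def FsymKL {X Y : Type*} [Fintype X] [Fintype Y]
    (pX : X → ℝ) (W : X → Y → ℝ) : ℝ :=
  (∑ x, ∑ y, pX x * W x y *
      Real.log (pX x * W x y / (pX x * (∑ x', pX x' * W x' y))))
    + ∑ x, ∑ y, pX x * (∑ x', pX x' * W x' y) *
        Real.log (pX x * (∑ x', pX x' * W x' y) / (pX x * W x y))

open Real Set

theorem ConvexOn.fun_sum {𝕜 E β ι : Type*} [Semiring 𝕜] [PartialOrder 𝕜]
    [AddCommMonoid E] [AddCommMonoid β] [PartialOrder β] [IsOrderedAddMonoid β]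
    [Module 𝕜 E] [Module 𝕜 β] {s : Set E} (hs : Convex 𝕜 s) (t : Finset ι) {f : ι → E → β}
    (hf : ∀ i ∈ t, ConvexOn 𝕜 s (f i)) : ConvexOn 𝕜 s (fun x => ∑ i ∈ t, f i x) := by
  classical
  induction t using Finset.induction_on with
  | empty => simpa using convexOn_const 0 hs
  | insert i t hi ih =>
    simp only [Finset.sum_insert hi]
    exact (hf i (Finset.mem_insert_self i t)).add
      (ih fun j hj => hf j (Finset.mem_insert_of_mem hj))

/-- The perspective of `x ↦ x log x`: `a log (a/b) = b · (a/b) log (a/b)`, so Jensen's inequality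
with weights proportional to `b` applies. -/
theorem convexOn_mul_log_div :
    ConvexOn ℝ (Ici 0 ×ˢ Ioi 0) (fun p : ℝ × ℝ => p.1 * log (p.1 / p.2)) := by
  refine ⟨(convex_Ici 0).prod (convex_Ioi 0), ?_⟩
  rintro ⟨a₀, b₀⟩ ⟨ha₀, hb₀⟩ ⟨a₁, b₁⟩ ⟨ha₁, hb₁⟩ s u hs hu hsu
  simp only [mem_Ici, mem_Ioi, Prod.smul_mk, Prod.mk_add_mk, smul_eq_mul] at *
  have hB : 0 < s * b₀ + u * b₁ := convex_Ioi (0 : ℝ) hb₀ hb₁ hs hu hsu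
  have key := convexOn_mul_log.2 (mem_Ici.2 (div_nonneg ha₀ hb₀.le))
    (mem_Ici.2 (div_nonneg ha₁ hb₁.le)) (by positivity : 0 ≤ s * b₀ / (s * b₀ + u * b₁))
    (by positivity : 0 ≤ u * b₁ / (s * b₀ + u * b₁)) (by field_simp)
  have hmix : s * b₀ / (s * b₀ + u * b₁) * (a₀ / b₀) + u * b₁ / (s * b₀ + u * b₁) * (a₁ / b₁)
      = (s * a₀ + u * a₁) / (s * b₀ + u * b₁) := by
    field_simp
  simp only [smul_eq_mul, hmix] at key
  have hscaled := mul_le_mul_of_nonneg_left key hB.le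
  calc (s * a₀ + u * a₁) * log ((s * a₀ + u * a₁) / (s * b₀ + u * b₁))
      = (s * b₀ + u * b₁) * ((s * a₀ + u * a₁) / (s * b₀ + u * b₁) *
          log ((s * a₀ + u * a₁) / (s * b₀ + u * b₁))) := by field_simp
    _ ≤ _ := hscaled
    _ = s * (a₀ * log (a₀ / b₀)) + u * (a₁ * log (a₁ / b₁)) := by field_simp

noncomputable def symmKLSummand (p : ℝ × ℝ) : ℝ := p.1 * log (p.1 / p.2) + p.2 * log (p.2 / p.1)

theorem convexOn_symmKLSummand : ConvexOn ℝ (Ioi 0 ×ˢ Ioi 0) symmKLSummand := by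
  have hsub : Ioi (0 : ℝ) ×ˢ Ioi (0 : ℝ) ⊆ Ici 0 ×ˢ Ioi 0 := prod_mono Ioi_subset_Ici_self le_rfl
  have hconv : Convex ℝ (Ioi (0 : ℝ) ×ˢ Ioi (0 : ℝ)) := (convex_Ioi 0).prod (convex_Ioi 0)
  have hswap := convexOn_mul_log_div.comp_linearMap (LinearEquiv.prodComm ℝ ℝ ℝ).toLinearMap
  exact (convexOn_mul_log_div.subset hsub hconv).add
    (hswap.subset (fun p hp => hsub ⟨hp.2, hp.1⟩) hconv)

theorem FsymKL_eq_sum_symmKLSummand {X Y : Type*} [Fintype X] [Fintype Y]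
    (pX : X → ℝ) (W : X → Y → ℝ) :
    FsymKL pX W = ∑ x, ∑ y, symmKLSummand (pX x * W x y, pX x * ∑ x', pX x' * W x' y) := by
  simp only [FsymKL, symmKLSummand, ← Finset.sum_add_distrib]

theorem convex_setOf_forall_pos {X Y : Type*} :
    Convex ℝ {W : X → Y → ℝ | ∀ x y, 0 < W x y} :=
  fun _ h₀ _ h₁ _ _ ha hb hab x y => convex_Ioi (0 : ℝ) (h₀ x y) (h₁ x y) ha hb hab

section Channel

variable {X Y : Type*} [Fintype X] (pX : X → ℝ)

noncomputable def jointAndProductAt (x : X) (y : Y) : (X → Y → ℝ) →ₗ[ℝ] ℝ × ℝ where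
  toFun W := (pX x * W x y, pX x * ∑ x', pX x' * W x' y)
  map_add' W V := by simp [mul_add, Finset.sum_add_distrib]
  map_smul' c W := by
    ext
    · simp only [Pi.smul_apply, smul_eq_mul, RingHom.id_apply, Prod.smul_fst]; ring
    · simp only [Pi.smul_apply, smul_eq_mul, RingHom.id_apply, Prod.smul_snd, Finset.mul_sum]
      exact Finset.sum_congr rfl fun _ _ => by ring

theorem convexOn_symmKLSummand_jointAndProductAt (hpX0 : ∀ x, 0 ≤ pX x) (x : X) (y : Y) :
    ConvexOn ℝ {W : X → Y → ℝ | ∀ x y, 0 < W x y}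
      (symmKLSummand ∘ jointAndProductAt pX x y) := by
  rcases (hpX0 x).eq_or_lt with hx | hx
  · have : symmKLSummand ∘ jointAndProductAt pX x y = fun _ => 0 := by
      ext W; simp [jointAndProductAt, ← hx, symmKLSummand]
    rw [this]
    exact convexOn_const 0 convex_setOf_forall_pos
  · refine (convexOn_symmKLSummand.comp_linearMap _).subset (fun W hW => ?_)
      convex_setOf_forall_pos
    have hpY : 0 < ∑ x', pX x' * W x' y :=
      Finset.sum_pos' (fun x' _ => mul_nonneg (hpX0 x') (hW x' y).le)
        ⟨x, Finset.mem_univ x, mul_pos hx (hW x y)⟩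
    exact ⟨mul_pos hx (hW x y), mul_pos hx hpY⟩

theorem convexOn_FsymKL [Fintype Y] (hpX0 : ∀ x, 0 ≤ pX x) :
    ConvexOn ℝ {W : X → Y → ℝ | ∀ x y, 0 < W x y} (FsymKL pX) := by
  simp only [funext (FsymKL_eq_sum_symmKLSummand pX)]
  exact ConvexOn.fun_sum convex_setOf_forall_pos _ fun x _ =>
    ConvexOn.fun_sum convex_setOf_forall_pos _ fun y _ =>
      convexOn_symmKLSummand_jointAndProductAt pX hpX0 x y

end Channel

theorem stmt_11_general {𝒳 𝒴 : Type*} [Fintype 𝒳] [Fintype 𝒴]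
    (pX : 𝒳 → ℝ)
    (hpX0 : ∀ x, 0 ≤ pX x)
    (W₀ W₁ : 𝒳 → 𝒴 → ℝ)
    (hW₀pos : ∀ x y, 0 < W₀ x y)
    (hW₁pos : ∀ x y, 0 < W₁ x y)
    (t : ℝ) (ht0 : 0 ≤ t) (ht1 : t ≤ 1) :
    FsymKL pX (fun x y => t * W₁ x y + (1 - t) * W₀ x y)
      ≤ t * FsymKL pX W₁ + (1 - t) * FsymKL pX W₀ :=
  (convexOn_FsymKL pX hpX0).2 hW₁pos hW₀pos ht0 (sub_nonneg.2 ht1) (add_sub_cancel t 1)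

/-- For a fixed input pmf, the symmetrized KL divergence between the joint pmf
and the product of its marginals is a convex function of the (strictly positive) channel. -/
theorem stmt_11 {𝒳 𝒴 : Type*} [Fintype 𝒳] [Fintype 𝒴]
    (pX : 𝒳 → ℝ)
    (hpX0 : ∀ x, 0 ≤ pX x) (hpX1 : ∀ x, pX x ≤ 1) (hpXsum : ∑ x, pX x = 1)
    (W₀ W₁ : 𝒳 → 𝒴 → ℝ)
    (hW₀pos : ∀ x y, 0 < W₀ x y) (hW₀le : ∀ x y, W₀ x y ≤ 1) (hW₀sum : ∀ x, ∑ y, W₀ x y = 1)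
    (hW₁pos : ∀ x y, 0 < W₁ x y) (hW₁le : ∀ x y, W₁ x y ≤ 1) (hW₁sum : ∀ x, ∑ y, W₁ x y = 1)
    (t : ℝ) (ht0 : 0 ≤ t) (ht1 : t ≤ 1) :
    FsymKL pX (fun x y => t * W₁ x y + (1 - t) * W₀ x y)
      ≤ t * FsymKL pX W₁ + (1 - t) * FsymKL pX W₀ :=
  stmt_11_general pX hpX0 W₀ W₁ hW₀pos hW₁pos t ht0 ht1
end

section
/- Let 0 < p < 1 and let W be the binary symmetric channel on {0,1} with crossover probability p, i.e., W(y|x) = 1 − p if y = x and W(y|x) = p if y ≠ x. For q ∈ [0,1], let the input be Bernoulli(q), let the joint pmf be P(x,y) = p_X(x)W(y|x) with p_X(1) = q, and let E(q) = Σ_{x,y} [P(x,y) − p_X(x)·p_Y(y)]·log W(y|x), where p_Y is the output pmf. Then for all q ∈ [0,1], E(q) ≤ −(1/2)·log(p(1−p)) − h(p), where h(p) = −p·log p − (1−p)·log(1−p), and equality holds at q = 1/2. -/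
/-!
For the binary symmetric channel the symmetrized divergence factors as
`E(q) = 2 q (1 - q) · (1 - 2p) log ((1 - p) / p)`. The second factor is nonnegative because
`log` is monotone, and `2 q (1 - q) ≤ 1/2` with equality exactly at `q = 1/2`; the right-hand
side of the bound is `(1/2) (1 - 2p) log ((1 - p) / p)`.
-/

open scoped BigOperators

/-- The symmetrized-KL expression `E(q)` for the binary symmetric channel with crossover
probability `p` and Bernoulli(`q`) input:
`E(q) = ∑ (x,y), (P(x,y) - pX x * pY y) * log (W x y)` with `pX 1 = q`, `pX 0 = 1 - q`,
`W(y|x) = 1 - p` if `y = x` and `p` otherwise, `P(x,y) = pX x * W x y`,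
`pY y = ∑ x, pX x * W x y`. -/
noncomputable def bscE (p q : ℝ) : ℝ :=
  ∑ x : Bool, ∑ y : Bool,
    ((if x then q else 1 - q) * (if y = x then 1 - p else p)
        - (if x then q else 1 - q) *
            (∑ x' : Bool, (if x' then q else 1 - q) * (if y = x' then 1 - p else p)))
      * Real.log (if y = x then 1 - p else p)

open Real

lemma bscE_eq (p q : ℝ) :
    bscE p q = 2 * q * (1 - q) * ((1 - 2 * p) * (log (1 - p) - log p)) := by
  simp [bscE]
  ring

lemma sub_mul_log_sub_log_nonneg {x y : ℝ} (hx : 0 < x) (hy : 0 < y) :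
    0 ≤ (x - y) * (log x - log y) := by
  rcases le_total x y with hxy | hyx
  · exact mul_nonneg_of_nonpos_of_nonpos (by linarith) (by linarith [log_le_log hx hxy])
  · exact mul_nonneg (by linarith) (by linarith [log_le_log hy hyx])

lemma neg_half_log_mul_one_sub_sub_binEntropy {p : ℝ} (hp0 : p ≠ 0) (hp1 : 1 - p ≠ 0) :
    -(1 / 2) * log (p * (1 - p)) - (-(p * log p) - (1 - p) * log (1 - p))
      = 1 / 2 * ((1 - 2 * p) * (log (1 - p) - log p)) := by
  rw [log_mul hp0 hp1]
  ring

/-- For the binary symmetric channel with crossover probability `0 < p < 1`,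
`E(q) ≤ -(1/2) log (p(1-p)) - h(p)` for all `q ∈ [0,1]`, with equality at `q = 1/2`,
where `h` is the binary entropy function in nats. -/
theorem stmt_12 (p : ℝ) (hp0 : 0 < p) (hp1 : p < 1) :
    (∀ q : ℝ, 0 ≤ q → q ≤ 1 →
      bscE p q ≤ -(1 / 2) * Real.log (p * (1 - p))
        - (-(p * Real.log p) - (1 - p) * Real.log (1 - p))) ∧
    bscE p (1 / 2) = -(1 / 2) * Real.log (p * (1 - p))
        - (-(p * Real.log p) - (1 - p) * Real.log (1 - p)) := by
  have h1p : 0 < 1 - p := sub_pos.mpr hp1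
  have hK : 0 ≤ (1 - 2 * p) * (log (1 - p) - log p) := by
    simpa only [sub_sub, sub_add_cancel, two_mul] using sub_mul_log_sub_log_nonneg h1p hp0
  rw [neg_half_log_mul_one_sub_sub_binEntropy hp0.ne' h1p.ne']
  refine ⟨fun q _ _ => ?_, ?_⟩
  · rw [bscE_eq]
    nlinarith [mul_nonneg hK (sq_nonneg (2 * q - 1))]
  · rw [bscE_eq]
    ring
end

section
/- Let A > 0, α > 0, and n ∈ ℕ with n ≥ 1. Let p = (p₀, p₁, …), p′ = (p′₀, p′₁, …), q = (q₀, q₁, …) be nonnegative sequences with Σᵢ pᵢ = 1, Σᵢ p′ᵢ = 1, and p′ = p ⋆ q (i.e., p′ᵢ = Σ_{j=0}^{i} p_j q_{i−j} for all i ≥ 0). Define P_n(A, α) = {(x₁,…,x_n) ∈ ℝⁿ : 0 ≤ xᵢ ≤ A for each i, (1/n)Σᵢ xᵢ ≤ α} and S_n(A, α, p) = { s ∈ ℝⁿ : sᵢ = Σ_{j=1}^{i} x_j p_{i−j} for 1 ≤ i ≤ n, for some x ∈ P_n(A, α) }. Then S_n(A, α, p′) ⊆ S_n(A, α, p). -/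
open scoped BigOperators

/-- The constraint set `P_n(A, α)` of nonnegative inputs bounded by `A` with average at
most `α`. -/
def PnSet (n : ℕ) (A α : ℝ) : Set (Fin n → ℝ) :=
  {x | (∀ i, 0 ≤ x i ∧ x i ≤ A) ∧ (1 / (n : ℝ)) * ∑ i, x i ≤ α}

/-- The set `S_n(A, α, p)` of truncated convolutions `(x ⋆ p)_n` of inputs `x ∈ P_n(A, α)`
with the sequence `p`. -/
def SnSet (n : ℕ) (A α : ℝ) (p : ℕ → ℝ) : Set (Fin n → ℝ) :=
  {s | ∃ x ∈ PnSet n A α, ∀ i : Fin n,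
    s i = ∑ j ∈ Finset.Iic i, x j * p ((i : ℕ) - (j : ℕ))}

/-!
Since `x ⋆ p' = x ⋆ (p ⋆ q) = (x ⋆ q) ⋆ p`, it suffices that `y = x ⋆ q`, truncated to
length `n`, again lies in `P_n(A, α)`. This holds because every partial sum of `q` is at
most `1`: `(∑_{j<N} p_j)(∑_{k<m} q_k) ≤ ∑_{i<N+m} p'_i ≤ 1`, and let `N → ∞`. Hence
`y_i ≤ A ∑_{k≤i} q_k ≤ A` and `∑_{i<n} y_i = ∑_{j<n} x_j ∑_{k<n-j} q_k ≤ ∑_{j<n} x_j`.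
-/

def seqConv {R : Type*} [CommSemiring R] (f g : ℕ → R) (i : ℕ) : R :=
  ∑ j ∈ Finset.range (i + 1), f j * g (i - j)

section PowerSeries

open PowerSeries

variable {R : Type*} [CommSemiring R]

theorem mk_seqConv (f g : ℕ → R) : mk (seqConv f g) = mk f * mk g := by
  ext i
  rw [coeff_mul, Finset.Nat.sum_antidiagonal_eq_sum_range_succ_mk]
  simp [seqConv]

theorem seqConv_comm (f g : ℕ → R) : seqConv f g = seqConv g f := by
  funext i
  simpa [← mk_seqConv] using congrArg (coeff i) (mul_comm (mk f) (mk g))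

theorem seqConv_assoc (f g h : ℕ → R) :
    seqConv (seqConv f g) h = seqConv f (seqConv g h) := by
  funext i
  simpa [← mk_seqConv] using congrArg (coeff i) (mul_assoc (mk f) (mk g) (mk h))

end PowerSeries

open Finset

section CommSemiring

variable {R : Type*} [CommSemiring R]

theorem sum_range_seqConv (f g : ℕ → R) (M : ℕ) :
    ∑ i ∈ range M, seqConv f g i = ∑ j ∈ range M, f j * ∑ k ∈ range (M - j), g k := by
  simp only [seqConv]
  rw [sum_comm' (t' := range M) (s' := fun j => Ico j M) (by
    intro i j
    simp only [mem_range, mem_Ico, Nat.lt_succ_iff]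
    omega)]
  refine sum_congr rfl fun j _ => ?_
  rw [mul_sum, sum_Ico_eq_sum_range]
  simp

theorem sum_Iic_fin_eq_seqConv {n : ℕ} (f g : ℕ → R) (i : Fin n) :
    ∑ j ∈ Iic i, f j * g (i - j) = seqConv f g i := by
  rw [seqConv, Nat.range_succ_eq_Iic, ← Fin.map_valEmbedding_Iic, sum_map]
  rfl

variable [PartialOrder R] [IsOrderedRing R]

theorem sum_range_mul_sum_range_le_sum_range_seqConv {f g : ℕ → R}
    (hf : ∀ i, 0 ≤ f i) (hg : ∀ i, 0 ≤ g i) (N M : ℕ) :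
    (∑ j ∈ range N, f j) * ∑ k ∈ range M, g k ≤
      ∑ i ∈ range (N + M), seqConv f g i := by
  rw [sum_range_seqConv, sum_mul]
  refine (sum_le_sum fun j hj => ?_).trans (sum_le_sum_of_subset_of_nonneg
    (range_subset_range.2 (Nat.le_add_right N M))
    fun j _ _ => mul_nonneg (hf j) (sum_nonneg fun k _ => hg k))
  refine mul_le_mul_of_nonneg_left (sum_le_sum_of_subset_of_nonneg
    (range_subset_range.2 ?_) fun k _ _ => hg k) (hf j)
  rw [mem_range] at hj
  omega

end CommSemiring

theorem summable_of_tsum_ne_zero {ι α : Type*} [AddCommMonoid α] [TopologicalSpace α]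
    {f : ι → α} (h : ∑' i, f i ≠ 0) : Summable f :=
  not_not.1 (mt tsum_eq_zero_of_not_summable h)

theorem sum_range_le_one_of_seqConv {f g : ℕ → ℝ} (hf : ∀ i, 0 ≤ f i) (hg : ∀ i, 0 ≤ g i)
    (hf1 : HasSum f 1) (hfg : ∀ N, ∑ i ∈ range N, seqConv f g i ≤ 1) (M : ℕ) :
    ∑ k ∈ range M, g k ≤ 1 := by
  have hlim : Filter.Tendsto (fun N => (∑ j ∈ range N, f j) * ∑ k ∈ range M, g k)
      Filter.atTop (nhds (1 * ∑ k ∈ range M, g k)) :=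
    hf1.tendsto_sum_nat.mul_const _
  have hbound : ∀ N, (∑ j ∈ range N, f j) * ∑ k ∈ range M, g k ≤ 1 := fun N =>
    (sum_range_mul_sum_range_le_sum_range_seqConv hf hg N M).trans (hfg _)
  simpa using le_of_tendsto' hlim hbound

theorem seqConv_mem_PnSet {n : ℕ} {A α : ℝ} {X q : ℕ → ℝ}
    (hX : (fun j : Fin n => X j) ∈ PnSet n A α) (hq : ∀ i, 0 ≤ q i)
    (hq1 : ∀ M, ∑ k ∈ range M, q k ≤ 1) :
    (fun i : Fin n => seqConv X q i) ∈ PnSet n A α := by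
  obtain ⟨hXA, hXavg⟩ := hX
  have hX0 : ∀ j < n, 0 ≤ X j := fun j hj => (hXA ⟨j, hj⟩).1
  refine ⟨fun i => ⟨?_, ?_⟩, ?_⟩
  · refine sum_nonneg fun j hj => mul_nonneg (hX0 j ?_) (hq _)
    rw [mem_range] at hj
    omega
  · have hA : 0 ≤ A := (hXA i).1.trans (hXA i).2
    calc seqConv X q i ≤ ∑ j ∈ range (i + 1), A * q (i - j) := by
          refine sum_le_sum fun j hj => mul_le_mul_of_nonneg_right ?_ (hq _)
          rw [mem_range] at hj
          exact (hXA ⟨j, by omega⟩).2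
      _ = A * ∑ k ∈ range (i + 1), q k := by
          rw [← mul_sum]
          exact congrArg _ (sum_range_reflect q _)
      _ ≤ A := mul_le_of_le_one_right hA (hq1 _)
  · have hsum : ∑ i : Fin n, seqConv X q i ≤ ∑ j : Fin n, X j := by
      rw [Fin.sum_univ_eq_sum_range (seqConv X q), Fin.sum_univ_eq_sum_range X,
        sum_range_seqConv]
      exact sum_le_sum fun j hj =>
        mul_le_of_le_one_right (hX0 j (mem_range.1 hj)) (hq1 _)
    exact (mul_le_mul_of_nonneg_left hsum (by positivity)).trans hXavg

theorem stmt_14_general (n : ℕ) (A α : ℝ)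
    (p p' q : ℕ → ℝ)
    (hp : ∀ i, 0 ≤ p i) (hp' : ∀ i, 0 ≤ p' i) (hq : ∀ i, 0 ≤ q i)
    (hpsum : ∑' i, p i = 1) (hp'sum : ∑' i, p' i = 1)
    (hconv : ∀ i, p' i = ∑ j ∈ Finset.range (i + 1), p j * q (i - j)) :
    SnSet n A α p' ⊆ SnSet n A α p := by
  have hp'conv : p' = seqConv p q := funext hconv
  have hq1 : ∀ M, ∑ k ∈ range M, q k ≤ 1 := by
    refine sum_range_le_one_of_seqConv hp hq ?_ fun N => ?_
    · exact hpsum ▸ (summable_of_tsum_ne_zero (hpsum ▸ one_ne_zero)).hasSum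
    · rw [← hp'conv, ← hp'sum]
      exact (summable_of_tsum_ne_zero (hp'sum ▸ one_ne_zero)).sum_le_tsum _
        fun i _ => hp' i
  rintro s ⟨x, hx, hsx⟩
  obtain ⟨X, rfl⟩ : ∃ X : ℕ → ℝ, x = fun j : Fin n => X j :=
    ⟨Function.extend Fin.val x 0, funext fun j => (Fin.val_injective.extend_apply x 0 j).symm⟩
  refine ⟨_, seqConv_mem_PnSet hx hq hq1, fun i => ?_⟩
  rw [hsx, sum_Iic_fin_eq_seqConv, sum_Iic_fin_eq_seqConv, hp'conv, seqConv_comm p q,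
    ← seqConv_assoc]

/-- If `p`, `p'` are nonnegative sequences summing to one with
`p' = p ⋆ q` for some nonnegative sequence `q`, then `S_n(A, α, p') ⊆ S_n(A, α, p)`. -/
theorem stmt_14 (n : ℕ) (hn : 1 ≤ n) (A α : ℝ) (hA : 0 < A) (hα : 0 < α)
    (p p' q : ℕ → ℝ)
    (hp : ∀ i, 0 ≤ p i) (hp' : ∀ i, 0 ≤ p' i) (hq : ∀ i, 0 ≤ q i)
    (hpsum : ∑' i, p i = 1) (hp'sum : ∑' i, p' i = 1)
    (hconv : ∀ i, p' i = ∑ j ∈ Finset.range (i + 1), p j * q (i - j)) :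
    SnSet n A α p' ⊆ SnSet n A α p :=
  stmt_14_general n A α p p' q hp hp' hq hpsum hp'sum hconv
end

section
/- Let k ∈ ℕ, let X = (X₁, …, X_{k+1}) be a random vector taking finitely many values in [0, ∞)^{k+1}, let p₀, …, p_k ≥ 0, set S = Σ_{j=0}^{k} p_j · X_{k+1−j}, and assume E[S] > 0. Let λ₀ > 0 and let Y be ℕ-valued and, conditionally on X, Poisson with parameter λ₀ + S. Define βᵢ = E[Xᵢ]/E[S] and X̃ᵢ = βᵢ · S for i = 1, …, k+1, and let Ỹ be ℕ-valued and, conditionally on (X̃₁,…,X̃_{k+1}), Poisson with parameter λ₀ + Σ_{j=0}^{k} p_j · X̃_{k+1−j}. Then: (i) Σ_{j=0}^{k} p_j · X̃_{k+1−j} = S almost surely; (ii) E[X̃ᵢ] = E[Xᵢ] for each i; and (iii) I(X̃₁, …, X̃_{k+1}; Ỹ) = I(X₁, …, X_{k+1}; Y). In particular, to maximize I(X₁,…,X_{k+1}; Y) over input distributions subject to given means, it suffices to consider inputs of the form Xᵢ = βᵢ · X for a single random variable X and nonnegative reals βᵢ. -/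
/-!
Both channels see their input `u` only through the statistic `g u = ∑ⱼ pⱼ u_{k+1-j}`, and
`g ∘ X̃ = S = g ∘ X` because `∑ⱼ pⱼ β_{k+1-j} = 1` by linearity of expectation. Summing the
mutual information over the fibres of `g` shows that, for a finitely valued input `Z`, `I(Z; Y)`
depends only on the law of `g(Z)` and on the channel, so the two mutual informations coincide.
-/

open MeasureTheory ProbabilityTheory
open scoped BigOperators ENNReal

/-- Mutual information of two discrete random variables, with the convention `0 log 0 = 0`
(automatic from Lean's conventions `0/0 = 0`, `log 0 = 0`). -/
noncomputable def miDiscrete {Ω U V : Type*} [MeasureSpace Ω]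
    (X : Ω → U) (Y : Ω → V) : ℝ :=
  ∑' (u : U) (v : V),
    (ℙ {ω | X ω = u ∧ Y ω = v}).toReal *
      Real.log ((ℙ {ω | X ω = u ∧ Y ω = v}).toReal /
        ((ℙ {ω | X ω = u}).toReal * (ℙ {ω | Y ω = v}).toReal))

section FiniteRange

variable {Ω U V W : Type*} [MeasurableSpace Ω] {μ : Measure Ω} {Z : Ω → U}

theorem tsum_measureReal_fiber_mul_eq_sum (hZfin : (Set.range Z).Finite) (f : U → ℝ) :
    ∑' u, μ.real {ω | Z ω = u} * f u = ∑ u ∈ hZfin.toFinset, μ.real {ω | Z ω = u} * f u := by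
  refine tsum_eq_sum fun u hu => ?_
  have hempty : {ω | Z ω = u} = ∅ :=
    Set.preimage_singleton_eq_empty.2 fun h => hu (hZfin.mem_toFinset.2 h)
  rw [hempty, measureReal_empty, zero_mul]

theorem measureReal_fiber_inter_comp [DecidableEq W] (g : U → W) (u : U) (s : W) :
    μ.real ({ω | Z ω = u} ∩ {ω | g (Z ω) = s}) = if g u = s then μ.real {ω | Z ω = u} else 0 := by
  split_ifs with h
  · congr 1
    exact Set.inter_eq_left.2 fun ω (hω : Z ω = u) => (congrArg g hω).trans h
  · have hempty : {ω | Z ω = u} ∩ {ω | g (Z ω) = s} = ∅ :=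
      Set.eq_empty_of_forall_notMem fun ω hω => h ((congrArg g hω.1).symm.trans hω.2)
    rw [hempty, measureReal_empty]

theorem MeasureTheory.Integrable.of_finite_range [IsFiniteMeasure μ] {E : Type*}
    [NormedAddCommGroup E] {f : Ω → E} (hf : AEStronglyMeasurable f μ)
    (hfin : (Set.range f).Finite) : Integrable f μ := by
  obtain ⟨C, hC⟩ := (hfin.image fun x => ‖x‖).bddAbove
  exact .of_bound hf C (ae_of_all _ fun ω => hC ⟨f ω, ⟨ω, rfl⟩, rfl⟩)

variable [MeasurableSpace U] [MeasurableSingletonClass U]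

theorem measure_eq_sum_inter_fiber (hZ : Measurable Z) (hZfin : (Set.range Z).Finite)
    (A : Set Ω) : μ A = ∑ u ∈ hZfin.toFinset, μ ({ω | Z ω = u} ∩ A) := by
  have hcover : (⋃ u ∈ hZfin.toFinset, {ω | Z ω = u}) = Set.univ :=
    Set.eq_univ_of_forall fun ω => Set.mem_biUnion (hZfin.mem_toFinset.2 ⟨ω, rfl⟩) rfl
  have hdisj : (hZfin.toFinset : Set U).PairwiseDisjoint fun u => {ω | Z ω = u} :=
    fun u _ v _ huv => Set.disjoint_left.2 fun ω (hu : Z ω = u) (hv : Z ω = v) =>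
      huv (hu.symm.trans hv)
  have hmeas : ∀ u, MeasurableSet {ω | Z ω = u} := fun u => hZ (measurableSet_singleton u)
  conv_lhs => rw [← Measure.restrict_univ (μ := μ), ← hcover,
    Measure.restrict_biUnion_finset hdisj hmeas, Measure.sum_apply_of_countable]
  rw [← Finset.tsum_subtype]
  exact tsum_congr fun u => by rw [Measure.restrict_apply' (hmeas u), Set.inter_comm]

theorem measureReal_eq_sum_inter_fiber [IsFiniteMeasure μ] (hZ : Measurable Z)
    (hZfin : (Set.range Z).Finite) (A : Set Ω) :
    μ.real A = ∑ u ∈ hZfin.toFinset, μ.real ({ω | Z ω = u} ∩ A) := by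
  rw [measureReal_def, measure_eq_sum_inter_fiber hZ hZfin A,
    ENNReal.toReal_sum fun u _ => measure_ne_top μ _]
  rfl

theorem tsum_measureReal_fiber_comp [IsFiniteMeasure μ] (hZ : Measurable Z)
    (hZfin : (Set.range Z).Finite) (g : U → W) (F : W → ℝ) :
    ∑' s, μ.real {ω | g (Z ω) = s} * F s = ∑' u, μ.real {ω | Z ω = u} * F (g u) := by
  classical
  have hgZfin : (Set.range fun ω => g (Z ω)).Finite :=
    (hZfin.image g).subset (Set.range_comp g Z).subset
  rw [tsum_measureReal_fiber_mul_eq_sum (Z := fun ω => g (Z ω)) hgZfin,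
    tsum_measureReal_fiber_mul_eq_sum hZfin]
  simp only [measureReal_eq_sum_inter_fiber hZ hZfin {ω | g (Z ω) = _},
    measureReal_fiber_inter_comp, Finset.sum_mul, ite_mul, zero_mul]
  rw [Finset.sum_comm]
  refine Finset.sum_congr rfl fun u hu => ?_
  rw [Finset.sum_ite_eq, if_pos]
  obtain ⟨ω, rfl⟩ := hZfin.mem_toFinset.1 hu
  exact hgZfin.mem_toFinset.2 ⟨ω, rfl⟩

theorem measureReal_eq_tsum_channel [IsFiniteMeasure μ] (hZ : Measurable Z)
    (hZfin : (Set.range Z).Finite) {Y : Ω → V} (g : U → W) (κ : W → V → ℝ≥0∞)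
    (hκ : ∀ u y, μ {ω | Z ω = u ∧ Y ω = y} = μ {ω | Z ω = u} * κ (g u) y) (y : V) :
    μ.real {ω | Y ω = y} = ∑' s, μ.real {ω | g (Z ω) = s} * (κ s y).toReal := by
  rw [tsum_measureReal_fiber_comp hZ hZfin, tsum_measureReal_fiber_mul_eq_sum hZfin,
    measureReal_eq_sum_inter_fiber hZ hZfin]
  refine Finset.sum_congr rfl fun u _ => ?_
  simp only [measureReal_def, ← ENNReal.toReal_mul, ← hκ]
  rfl

end FiniteRange

/-- `π` gives the point masses of the input law, `κ s` the output law on input `s`. -/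
noncomputable def channelMutualInfo {W V : Type*} (π : W → ℝ) (κ : W → V → ℝ≥0∞) : ℝ :=
  ∑' s, π s * ∑' y, (κ s y).toReal * Real.log ((κ s y).toReal / ∑' t, π t * (κ t y).toReal)

theorem miDiscrete_eq_channelMutualInfo {Ω U V W : Type*} [MeasureSpace Ω]
    [IsFiniteMeasure (ℙ : Measure Ω)] [MeasurableSpace U] [MeasurableSingletonClass U]
    {Z : Ω → U} (hZ : Measurable Z) (hZfin : (Set.range Z).Finite) {Y : Ω → V}
    (g : U → W) (κ : W → V → ℝ≥0∞)
    (hκ : ∀ u y, ℙ {ω | Z ω = u ∧ Y ω = y} = ℙ {ω | Z ω = u} * κ (g u) y) :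
    miDiscrete Z Y = channelMutualInfo (fun s => (ℙ : Measure Ω).real {ω | g (Z ω) = s}) κ := by
  unfold miDiscrete channelMutualInfo
  set μ : Measure Ω := ℙ
  simp only [← measureReal_def]
  have hjoint : ∀ u y,
      μ.real {ω | Z ω = u ∧ Y ω = y} = μ.real {ω | Z ω = u} * (κ (g u) y).toReal := by
    simp only [measureReal_def, hκ, ENNReal.toReal_mul, implies_true]
  have hterm : ∀ u, ∑' y, μ.real {ω | Z ω = u ∧ Y ω = y} *
      Real.log (μ.real {ω | Z ω = u ∧ Y ω = y} / (μ.real {ω | Z ω = u} * μ.real {ω | Y ω = y}))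
      = μ.real {ω | Z ω = u} *
        ∑' y, (κ (g u) y).toReal * Real.log ((κ (g u) y).toReal / μ.real {ω | Y ω = y}) := by
    intro u
    rw [← tsum_mul_left]
    refine tsum_congr fun y => ?_
    rcases eq_or_ne (μ.real {ω | Z ω = u}) 0 with h | h
    · simp [hjoint, h]
    · rw [hjoint, mul_div_mul_left _ _ h, mul_assoc]
  rw [tsum_congr hterm, ← tsum_measureReal_fiber_comp hZ hZfin g fun s =>
    ∑' y, (κ s y).toReal * Real.log ((κ s y).toReal / μ.real {ω | Y ω = y})]
  simp only [measureReal_eq_tsum_channel hZ hZfin g κ hκ]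

theorem stmt_16_general {Ω : Type*} [MeasureSpace Ω] [IsProbabilityMeasure (ℙ : Measure Ω)]
    (k : ℕ) (X : Ω → (Fin (k + 1) → ℝ))
    (hXmeas : Measurable X) (hXfin : (Set.range X).Finite)
    (p : Fin (k + 1) → ℝ)
    (lam0 : ℝ)
    (Y : Ω → ℕ)
    (S : Ω → ℝ) (hS : S = fun ω => ∑ j, p j * X ω j.rev)
    (hES : 0 < ∫ ω, S ω ∂ℙ)
    (hcond : ∀ (u : Fin (k + 1) → ℝ) (y : ℕ),
      ℙ {ω | X ω = u ∧ Y ω = y}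
        = ℙ {ω | X ω = u} *
            ENNReal.ofReal (Real.exp (-(lam0 + ∑ j, p j * u j.rev)) *
              (lam0 + ∑ j, p j * u j.rev) ^ y / (Nat.factorial y)))
    (β : Fin (k + 1) → ℝ) (hβ : ∀ i, β i = (∫ ω, X ω i ∂ℙ) / (∫ ω, S ω ∂ℙ))
    (Xt : Ω → (Fin (k + 1) → ℝ)) (hXt : Xt = fun ω i => β i * S ω)
    (Yt : Ω → ℕ)
    (hcondt : ∀ (u : Fin (k + 1) → ℝ) (y : ℕ),
      ℙ {ω | Xt ω = u ∧ Yt ω = y}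
        = ℙ {ω | Xt ω = u} *
            ENNReal.ofReal (Real.exp (-(lam0 + ∑ j, p j * u j.rev)) *
              (lam0 + ∑ j, p j * u j.rev) ^ y / (Nat.factorial y))) :
    (∀ᵐ ω ∂ℙ, ∑ j, p j * Xt ω j.rev = S ω) ∧
    (∀ i, ∫ ω, Xt ω i ∂ℙ = ∫ ω, X ω i ∂ℙ) ∧
    miDiscrete Xt Yt = miDiscrete X Y := by
  let g : (Fin (k + 1) → ℝ) → ℝ := fun u => ∑ j, p j * u j.rev
  let κ : ℝ → ℕ → ℝ≥0∞ := fun s y =>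
    ENNReal.ofReal (Real.exp (-(lam0 + s)) * (lam0 + s) ^ y / (Nat.factorial y))
  have hint : ∀ i, Integrable (fun ω => X ω i) :=
    fun i => .of_finite_range ((measurable_pi_apply i).comp hXmeas).aestronglyMeasurable
      ((hXfin.image (· i)).subset (Set.range_comp (fun u : Fin (k + 1) → ℝ => u i) X).subset)
  have hES_sum : ∫ ω, S ω = ∑ j, p j * ∫ ω, X ω j.rev := by
    rw [hS, integral_finsetSum _ fun j _ => (hint j.rev).const_mul (p j)]
    simp only [integral_const_mul]
  have hβsum : ∑ j, p j * β j.rev = 1 := by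
    simp only [hβ, mul_div_assoc', ← Finset.sum_div, ← hES_sum]
    exact div_self hES.ne'
  have hXtS : ∀ ω, ∑ j, p j * Xt ω j.rev = S ω := fun ω => by
    simp only [hXt, ← mul_assoc, ← Finset.sum_mul, hβsum, one_mul]
  refine ⟨ae_of_all _ hXtS, fun i => ?_, ?_⟩
  · simp only [hXt, integral_const_mul, hβ, div_mul_cancel₀ _ hES.ne']
  have hXt_eq_comp : Xt = (fun u i => β i * g u) ∘ X := by rw [hXt, hS]; rfl
  have hXtmeas : Measurable Xt :=
    hXt_eq_comp ▸ (by fun_prop : Measurable fun u i => β i * g u).comp hXmeas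
  have hXtfin : (Set.range Xt).Finite :=
    hXt_eq_comp ▸ Set.range_comp _ X ▸ hXfin.image _
  have hgXt : ∀ ω, g (Xt ω) = g (X ω) := fun ω => (hXtS ω).trans (congrFun hS ω)
  rw [miDiscrete_eq_channelMutualInfo hXtmeas hXtfin g κ hcondt,
    miDiscrete_eq_channelMutualInfo hXmeas hXfin g κ hcond]
  simp only [hgXt]

/-- With `S = ∑_{j=0}^{k} p_j X_{k+1-j}`, `E[S] > 0`, `βᵢ = E[Xᵢ]/E[S]`,
`X̃ᵢ = βᵢ S`, and `Ỹ` conditionally Poisson with parameter `λ₀ + ∑_j p_j X̃_{k+1-j}` given `X̃`: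
(i) `∑_j p_j X̃_{k+1-j} = S` a.s.; (ii) `E[X̃ᵢ] = E[Xᵢ]`; (iii) `I(X̃; Ỹ) = I(X; Y)`.
In particular, to maximize `I(X₁,…,X_{k+1}; Y)` subject to given means it suffices to consider
inputs of the form `Xᵢ = βᵢ X`. -/
theorem stmt_16 {Ω : Type*} [MeasureSpace Ω] [IsProbabilityMeasure (ℙ : Measure Ω)]
    (k : ℕ) (X : Ω → (Fin (k + 1) → ℝ))
    (hXmeas : Measurable X) (hXfin : (Set.range X).Finite)
    (hXpos : ∀ ω i, 0 ≤ X ω i)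
    (p : Fin (k + 1) → ℝ) (hp : ∀ j, 0 ≤ p j)
    (lam0 : ℝ) (hlam0 : 0 < lam0)
    (Y : Ω → ℕ) (hY : Measurable Y)
    (S : Ω → ℝ) (hS : S = fun ω => ∑ j, p j * X ω j.rev)
    (hES : 0 < ∫ ω, S ω ∂ℙ)
    (hcond : ∀ (u : Fin (k + 1) → ℝ) (y : ℕ),
      ℙ {ω | X ω = u ∧ Y ω = y}
        = ℙ {ω | X ω = u} *
            ENNReal.ofReal (Real.exp (-(lam0 + ∑ j, p j * u j.rev)) *
              (lam0 + ∑ j, p j * u j.rev) ^ y / (Nat.factorial y)))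
    (β : Fin (k + 1) → ℝ) (hβ : ∀ i, β i = (∫ ω, X ω i ∂ℙ) / (∫ ω, S ω ∂ℙ))
    (Xt : Ω → (Fin (k + 1) → ℝ)) (hXt : Xt = fun ω i => β i * S ω)
    (Yt : Ω → ℕ) (hYt : Measurable Yt)
    (hcondt : ∀ (u : Fin (k + 1) → ℝ) (y : ℕ),
      ℙ {ω | Xt ω = u ∧ Yt ω = y}
        = ℙ {ω | Xt ω = u} *
            ENNReal.ofReal (Real.exp (-(lam0 + ∑ j, p j * u j.rev)) *
              (lam0 + ∑ j, p j * u j.rev) ^ y / (Nat.factorial y))) :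
    (∀ᵐ ω ∂ℙ, ∑ j, p j * Xt ω j.rev = S ω) ∧
    (∀ i, ∫ ω, Xt ω i ∂ℙ = ∫ ω, X ω i ∂ℙ) ∧
    miDiscrete Xt Yt = miDiscrete X Y :=
  stmt_16_general k X hXmeas hXfin p lam0 Y S hS hES hcond β hβ Xt hXt Yt hcondt
end

section
/- Let S be a finite set, k ≥ 1, r ≥ 1, and let q be a pmf on S^{k+1} whose marginal on the first k coordinates equals its marginal on the last k coordinates, i.e., Σ_{a} q(x₁,…,x_k, a) = Σ_{a} q(a, x₁,…,x_k) for all (x₁,…,x_k) ∈ S^k. Define a process X₁, …, X_{k+r} by: (X₁,…,X_{k+1}) is distributed according to q, and for k+2 ≤ i ≤ k+r, conditionally on (X₁,…,X_{i−1}), the variable Xᵢ depends only on (X_{i−k},…,X_{i−1}) and P(Xᵢ = a | X_{i−k} = x₁, …, X_{i−1} = x_k) = q(x₁,…,x_k,a) / Σ_{b} q(x₁,…,x_k,b) whenever the denominator is positive. Then for every i with k+1 ≤ i ≤ k+r, the random vector (X_{i−k}, X_{i−k+1}, …, Xᵢ) is distributed according to q. -/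
open MeasureTheory ProbabilityTheory
open scoped BigOperators ENNReal

/-!
Induction on the position of the window. If `(X_m, …, X_{m+k})` has law `q`, summing out `X_m`
and using that the two `k`-marginals of `q` agree shows that the block `(X_{m+1}, …, X_{m+k})`
has law `w ↦ ∑ b, q (w, b)`. This block event is a union of fibres of the full history
`(X_1, …, X_{m+k})`, and on each such fibre the Markov property gives `X_{m+k+1} = a` with the same
conditional probability `q (w, a) / ∑ b, q (w, b)`; multiplying recovers `q (w, a)`. When
`∑ b, q (w, b) = 0` the block is null and there is nothing to condition on.
-/

section Fibres

variable {Ω β : Type*} [MeasurableSpace Ω] [MeasurableSpace β] [MeasurableSingletonClass β]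
  {μ : Measure Ω} {Y : Ω → β}

theorem measure_eq_sum_measure_preimage_singleton_inter [Fintype β] (hY : Measurable Y)
    (A : Set Ω) : μ A = ∑ b, μ (Y ⁻¹' {b} ∩ A) := by
  have hfib : ∀ b, MeasurableSet (Y ⁻¹' {b}) := fun b => hY (measurableSet_singleton b)
  simp_rw [← Measure.restrict_apply (hfib _)]
  rw [sum_measure_preimage_singleton _ fun b _ => hfib b, Finset.coe_univ, Set.preimage_univ,
    Measure.restrict_apply_univ]

theorem measure_preimage_inter_eq_mul [Countable β] (hY : Measurable Y) {A : Set Ω} {B : Set β}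
    {p : ℝ≥0∞} (h : ∀ b ∈ B, μ (Y ⁻¹' {b} ∩ A) = μ (Y ⁻¹' {b}) * p) :
    μ (Y ⁻¹' B ∩ A) = μ (Y ⁻¹' B) * p := by
  have hfib : ∀ b ∈ B, MeasurableSet (Y ⁻¹' {b}) := fun b _ => hY (measurableSet_singleton b)
  rw [← Measure.restrict_apply (hY B.to_countable.measurableSet),
    ← tsum_measure_preimage_singleton B.to_countable hfib,
    ← tsum_measure_preimage_singleton B.to_countable hfib, ← ENNReal.tsum_mul_right]
  exact tsum_congr fun b => by rw [Measure.restrict_apply (hfib b b.2), h b b.2]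

end Fibres

section Windows

variable {S Ω : Type*} {X : ℕ → Ω → S}

def window (X : ℕ → Ω → S) (m : ℕ) {n : ℕ} (v : Fin n → S) : Set Ω :=
  {ω | ∀ t : Fin n, X (m + t) ω = v t}

theorem window_cons (m : ℕ) {n : ℕ} (a : S) (w : Fin n → S) :
    window X m (Fin.cons a w : Fin (n + 1) → S) = X m ⁻¹' {a} ∩ window X (m + 1) w := by
  ext ω
  simp [window, Fin.forall_fin_succ, add_assoc, add_comm 1]

theorem window_snoc (m : ℕ) {n : ℕ} (w : Fin n → S) (a : S) :
    window X m (Fin.snoc w a : Fin (n + 1) → S) = window X m w ∩ X (m + n) ⁻¹' {a} := by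
  ext ω
  simp [window, Fin.forall_fin_succ']

variable [MeasurableSpace Ω] {μ : Measure Ω} [MeasurableSpace S] [MeasurableSingletonClass S]

theorem measure_window_succ_eq_sum [Fintype S] {m : ℕ} (hX : Measurable (X m)) {n : ℕ}
    (w : Fin n → S) : μ (window X (m + 1) w) = ∑ a, μ (window X m (Fin.cons a w)) := by
  simp_rw [window_cons]
  exact measure_eq_sum_measure_preimage_singleton_inter hX _

theorem measure_window_snoc_eq_mul [Finite S] (hX : ∀ i, Measurable (X i)) (m : ℕ) {k : ℕ}
    (w : Fin k → S) (a : S) {p : ℝ≥0∞}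
    (hmarkov : ∀ h : ℕ → S, (fun t : Fin k => h (m + 1 + t)) = w →
      μ {ω | (∀ j, 1 ≤ j → j ≤ m + k → X j ω = h j) ∧ X (m + 1 + k) ω = a}
        = μ {ω | ∀ j, 1 ≤ j → j ≤ m + k → X j ω = h j} * p) :
    μ (window X (m + 1) (Fin.snoc w a)) = μ (window X (m + 1) w) * p := by
  let Y : Ω → Set.Icc 1 (m + k) → S := fun ω j => X j ω
  have hY : Measurable Y := measurable_pi_lambda _ fun j => hX j
  have hblock : Y ⁻¹' (Y '' window X (m + 1) w) = window X (m + 1) w := by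
    refine (Set.subset_preimage_image _ _).antisymm' ?_
    rintro ω ⟨ω', hω', hωω'⟩ t
    rw [← hω' t]
    exact (congrFun hωω' ⟨m + 1 + t, by omega, by omega⟩).symm
  rw [window_snoc, ← hblock, measure_preimage_inter_eq_mul hY]
  rintro _ ⟨ω₀, hω₀, rfl⟩
  have hfib : Y ⁻¹' {Y ω₀} = {ω | ∀ j, 1 ≤ j → j ≤ m + k → X j ω = X j ω₀} := by
    ext ω
    simp [Y, funext_iff]
  rw [hfib, ← hmarkov (fun j => X j ω₀) (funext hω₀)]
  rfl

theorem measure_window_succ_of_markov [Fintype S] (hX : ∀ i, Measurable (X i)) {m k : ℕ}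
    {q : (Fin (k + 1) → S) → ℝ} (hq0 : ∀ v, 0 ≤ q v)
    (hstat : ∀ w : Fin k → S, ∑ a, q (Fin.snoc w a) = ∑ a, q (Fin.cons a w))
    (hlaw : ∀ v, μ (window X m v) = ENNReal.ofReal (q v))
    (hmarkov : ∀ (h : ℕ → S) (a : S),
      0 < ∑ b, q (Fin.snoc (fun t : Fin k => h (m + 1 + t)) b) →
      μ {ω | (∀ j, 1 ≤ j → j ≤ m + k → X j ω = h j) ∧ X (m + 1 + k) ω = a}
        = μ {ω | ∀ j, 1 ≤ j → j ≤ m + k → X j ω = h j}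
          * ENNReal.ofReal (q (Fin.snoc (fun t : Fin k => h (m + 1 + t)) a)
              / ∑ b, q (Fin.snoc (fun t : Fin k => h (m + 1 + t)) b)))
    (v : Fin (k + 1) → S) : μ (window X (m + 1) v) = ENNReal.ofReal (q v) := by
  rw [← Fin.snoc_init_self v]
  set w := Fin.init v
  set a := v (Fin.last k)
  have hK : μ (window X (m + 1) w) = ENNReal.ofReal (∑ b, q (Fin.snoc w b)) := by
    simp_rw [measure_window_succ_eq_sum (hX m), hlaw, hstat]
    exact (ENNReal.ofReal_sum_of_nonneg fun b _ => hq0 _).symm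
  rcases (Finset.sum_nonneg fun b _ => hq0 (Fin.snoc w b)).eq_or_lt with hD | hD
  · have hqa : q (Fin.snoc w a) = 0 :=
      (Finset.sum_eq_zero_iff_of_nonneg fun b _ => hq0 _).1 hD.symm a (Finset.mem_univ a)
    rw [hqa, ENNReal.ofReal_zero]
    exact measure_mono_null (window_snoc (m + 1) w a ▸ Set.inter_subset_left)
      (by rw [hK, ← hD, ENNReal.ofReal_zero])
  · rw [measure_window_snoc_eq_mul hX m w a fun h hw => hw ▸ hmarkov h a (hw ▸ hD), hK,
      ← ENNReal.ofReal_mul hD.le, mul_div_cancel₀ _ hD.ne']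

end Windows

theorem stmt_17_general {S : Type*} [Fintype S] [MeasurableSpace S] [MeasurableSingletonClass S]
    {Ω : Type*} [MeasureSpace Ω]
    (k r : ℕ)
    (q : (Fin (k + 1) → S) → ℝ)
    (hq0 : ∀ v, 0 ≤ q v)
    (hstat : ∀ w : Fin k → S, ∑ a, q (Fin.snoc w a) = ∑ a, q (Fin.cons a w))
    (X : ℕ → Ω → S) (hX : ∀ i, Measurable (X i))
    (hinit : ∀ v : Fin (k + 1) → S,
      ℙ {ω | ∀ t : Fin (k + 1), X (1 + (t : ℕ)) ω = v t} = ENNReal.ofReal (q v))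
    (hmarkov : ∀ i, k + 2 ≤ i → i ≤ k + r → ∀ (h : ℕ → S) (a : S),
      0 < ∑ b, q (Fin.snoc (fun t : Fin k => h (i - k + (t : ℕ))) b) →
      ℙ {ω | (∀ j, 1 ≤ j → j ≤ i - 1 → X j ω = h j) ∧ X i ω = a}
        = ℙ {ω | ∀ j, 1 ≤ j → j ≤ i - 1 → X j ω = h j}
          * ENNReal.ofReal (q (Fin.snoc (fun t : Fin k => h (i - k + (t : ℕ))) a)
              / ∑ b, q (Fin.snoc (fun t : Fin k => h (i - k + (t : ℕ))) b))) :
    ∀ i, k + 1 ≤ i → i ≤ k + r → ∀ v : Fin (k + 1) → S,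
      ℙ {ω | ∀ t : Fin (k + 1), X (i - k + (t : ℕ)) ω = v t} = ENNReal.ofReal (q v) := by
  suffices hlaw : ∀ m, m + 1 ≤ r → ∀ v, ℙ (window X (m + 1) v) = ENNReal.ofReal (q v) by
    intro i hi hir v
    have := hlaw (i - k - 1) (by omega) v
    rwa [show i - k - 1 + 1 = i - k by omega] at this
  intro m
  induction m with
  | zero => exact fun _ => hinit
  | succ m ih =>
    refine fun hm => measure_window_succ_of_markov hX hq0 hstat (ih (by omega)) fun h a hD => ?_
    have hstep := hmarkov (m + 1 + 1 + k) (by omega) (by omega) h a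
    rw [show m + 1 + 1 + k - k = m + 1 + 1 by omega,
      show m + 1 + 1 + k - 1 = m + 1 + k by omega] at hstep
    exact hstep hD

/-- Let `q` be a pmf on `S^{k+1}` whose marginal on the first `k` coordinates
equals its marginal on the last `k` coordinates. Consider the order-`k` Markov process
`X₁, …, X_{k+r}` started from `q` on `(X₁, …, X_{k+1})` and evolving with the conditional
distribution of the last coordinate of `q` given the first `k` (depending only on the last `k`
symbols of the history). Then for every `k+1 ≤ i ≤ k+r`, the vector `(X_{i-k}, …, X_i)` is
distributed according to `q`. -/
theorem stmt_17 {S : Type*} [Fintype S] [MeasurableSpace S] [MeasurableSingletonClass S]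
    {Ω : Type*} [MeasureSpace Ω] [IsProbabilityMeasure (ℙ : Measure Ω)]
    (k r : ℕ) (hk : 1 ≤ k) (hr : 1 ≤ r)
    (q : (Fin (k + 1) → S) → ℝ)
    (hq0 : ∀ v, 0 ≤ q v) (hq1 : ∀ v, q v ≤ 1) (hqsum : ∑ v, q v = 1)
    (hstat : ∀ w : Fin k → S, ∑ a, q (Fin.snoc w a) = ∑ a, q (Fin.cons a w))
    (X : ℕ → Ω → S) (hX : ∀ i, Measurable (X i))
    (hinit : ∀ v : Fin (k + 1) → S,
      ℙ {ω | ∀ t : Fin (k + 1), X (1 + (t : ℕ)) ω = v t} = ENNReal.ofReal (q v))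
    (hmarkov : ∀ i, k + 2 ≤ i → i ≤ k + r → ∀ (h : ℕ → S) (a : S),
      0 < ∑ b, q (Fin.snoc (fun t : Fin k => h (i - k + (t : ℕ))) b) →
      ℙ {ω | (∀ j, 1 ≤ j → j ≤ i - 1 → X j ω = h j) ∧ X i ω = a}
        = ℙ {ω | ∀ j, 1 ≤ j → j ≤ i - 1 → X j ω = h j}
          * ENNReal.ofReal (q (Fin.snoc (fun t : Fin k => h (i - k + (t : ℕ))) a)
              / ∑ b, q (Fin.snoc (fun t : Fin k => h (i - k + (t : ℕ))) b))) :
    ∀ i, k + 1 ≤ i → i ≤ k + r → ∀ v : Fin (k + 1) → S,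
      ℙ {ω | ∀ t : Fin (k + 1), X (i - k + (t : ℕ)) ω = v t} = ENNReal.ofReal (q v) :=
  stmt_17_general k r q hq0 hstat X hX hinit hmarkov
end
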